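/- arXiv:2011.13762 — 6 statements merged into one kernel-verified Lean document; each statement's English description precedes it below -/
import Mathlib

section
/- Let H₁,…,Hₘ be finite-dimensional real inner product spaces, H a subspace of H₁ × ⋯ × Hₘ, and W a subspace of H^⊥. Define V = ((π₁W)^⊥ × ⋯ × (πₘW)^⊥) ∩ H, where πⱼ is the j-th coordinate projection and (πⱼW)^⊥ is the orthogonal complement of πⱼW in Hⱼ. Then dim V ≥ Σⱼ dim (πⱼW)^⊥ − dim W^⊥, where W^⊥ is the orthogonal complement of W in H^⊥ (so that W ⊕ W^⊥ = H^⊥). -/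
open Module

/-!
Let `K = ∏ⱼ (πⱼW)ᗮ`, so `dim K = Σⱼ dim (πⱼW)ᗮ`. Both `K` and `H` lie in `Wᗮ`, hence
`dim (K ⊓ H) ≥ dim K + dim H - dim Wᗮ`. Since `H ≤ Wᗮ`, the complement of `H` inside `Wᗮ` is
`Wᗮ ⊓ Hᗮ`, so `dim Wᗮ - dim H = dim (Wᗮ ⊓ Hᗮ)`.
-/

theorem Submodule.finrank_add_finrank_le_finrank_add_finrank_inf {K V : Type*} [DivisionRing K]
    [AddCommGroup V] [Module K V] {s t u : Submodule K V} [FiniteDimensional K u]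
    (hs : s ≤ u) (ht : t ≤ u) :
    finrank K s + finrank K t ≤ finrank K u + finrank K (s ⊓ t : Submodule K V) := by
  have := Submodule.finiteDimensional_of_le hs
  have := Submodule.finiteDimensional_of_le ht
  rw [← Submodule.finrank_sup_add_finrank_inf_eq]
  exact Nat.add_le_add_right (Submodule.finrank_mono (sup_le hs ht)) _

namespace PiLp

theorem finrank_iInf_comap_projₗ {K ι : Type*} [Field K] [Fintype ι] (p : ENNReal)
    {β : ι → Type*} [∀ i, SeminormedAddCommGroup (β i)] [∀ i, Module K (β i)]
    [∀ i, FiniteDimensional K (β i)] (s : ∀ i, Submodule K (β i)) :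
    finrank K (⨅ i, (s i).comap (projₗ p β i) : Submodule K (PiLp p β)) = ∑ i, finrank K (s i) := by
  let e : (⨅ i, (s i).comap (projₗ p β i) : Submodule K (PiLp p β)) ≃ₗ[K] ∀ i, s i :=
    { toFun := fun x i => ⟨x.1 i, Submodule.mem_iInf _ |>.mp x.2 i⟩
      map_add' := fun _ _ => rfl
      map_smul' := fun _ _ => rfl
      invFun := fun v => ⟨WithLp.toLp p fun i => (v i).1, Submodule.mem_iInf _ |>.mpr fun i => (v i).2⟩
      left_inv := fun _ => rfl
      right_inv := fun _ => rfl }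
  rw [e.finrank_eq, Module.finrank_pi_fintype]

theorem iInf_comap_projₗ_orthogonal_map_le_orthogonal {𝕜 ι : Type*} [RCLike 𝕜] [Fintype ι]
    {E : ι → Type*} [∀ i, NormedAddCommGroup (E i)] [∀ i, InnerProductSpace 𝕜 (E i)]
    (W : Submodule 𝕜 (PiLp 2 E)) :
    ⨅ i, ((W.map (projₗ 2 E i))ᗮ).comap (projₗ 2 E i) ≤ Wᗮ := by
  intro x hx
  rw [Submodule.mem_orthogonal]
  intro w hw
  rw [PiLp.inner_apply]
  exact Finset.sum_eq_zero fun i _ =>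
    (Submodule.mem_iInf _ |>.mp hx i) (w i) (Submodule.mem_map_of_mem hw)

end PiLp

/-- With `V = ((π₁W)ᗮ × ⋯ × (πₘW)ᗮ) ∩ H` one has
`dim V ≥ Σⱼ dim (πⱼW)ᗮ − dim Wᗮ`, where `Wᗮ` is the orthogonal complement of `W`
inside `Hᗮ` (realised as `Wᗮ ⊓ Hᗮ` in the ambient product space). -/
theorem dim_lower_bound_for_dual_subspace {m : ℕ} {E : Fin m → Type*}
    [∀ j, NormedAddCommGroup (E j)] [∀ j, InnerProductSpace ℝ (E j)]
    [∀ j, FiniteDimensional ℝ (E j)]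
    (H W : Submodule ℝ (PiLp 2 E)) (hW : W ≤ Hᗮ) :
    ((∑ j, (finrank ℝ ((W.map (PiLp.projₗ 2 E j))ᗮ) : ℤ))
        - (finrank ℝ ((Wᗮ ⊓ Hᗮ : Submodule ℝ (PiLp 2 E))) : ℤ))
      ≤ (finrank ℝ
          (((⨅ j, Submodule.comap (PiLp.projₗ 2 E j) ((W.map (PiLp.projₗ 2 E j))ᗮ)) ⊓ H
            : Submodule ℝ (PiLp 2 E))) : ℤ) := by
  have hHW : H ≤ Wᗮ := Submodule.IsOrtho.symm hW
  have hKH := Submodule.finrank_add_finrank_le_finrank_add_finrank_inf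
    (PiLp.iInf_comap_projₗ_orthogonal_map_le_orthogonal W) hHW
  have hWH := Submodule.finrank_add_inf_finrank_orthogonal hHW
  rw [PiLp.finrank_iInf_comap_projₗ] at hKH
  rw [inf_comm] at hWH
  rw [← Nat.cast_sum]
  omega
end

section
/- Let H₁,…,Hₘ be finite-dimensional real inner product spaces, H ≤ H₁ × ⋯ × Hₘ, and p₁,…,pₘ ∈ [1,∞]. Suppose dim H = Σⱼ (dim Hⱼ)/pⱼ and dim V ≤ Σⱼ (dim πⱼV)/pⱼ for every subspace V ≤ H. Then for every subspace W ≤ H^⊥ one has dim W ≤ Σⱼ (dim πⱼW)/pⱼ', where pⱼ' is the conjugate exponent of pⱼ. -/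
/-!
Put `K j = πⱼ W`, let `S = ∏ⱼ K j ⊇ W` and `V = H ⊓ Sᗮ`. Counting dimensions of orthogonal
complements gives `dim H + dim W ≤ dim V + ∑ dim K j`, and `πⱼ V ⊥ K j` gives
`dim πⱼ V + dim K j ≤ dim Hⱼ`. The dimension condition for `V` together with the scaling condition
then yields `dim V + ∑ dim K j / pⱼ ≤ dim H`; since `dim K j = dim K j / pⱼ + dim K j / pⱼ'`,
the two estimates combine to `dim W ≤ ∑ dim K j / pⱼ'`.
-/

open Module ENNReal

namespace Submodule

variable {𝕜 E : Type*} [RCLike 𝕜] [NormedAddCommGroup E] [InnerProductSpace 𝕜 E]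
  [FiniteDimensional 𝕜 E]

theorem finrank_add_finrank_orthogonal_inf (H S : Submodule 𝕜 E) :
    finrank 𝕜 H + finrank 𝕜 ↥(Hᗮ ⊓ S) = finrank 𝕜 ↥(H ⊓ Sᗮ) + finrank 𝕜 S := by
  have hsup : finrank 𝕜 ↥(Hᗮ ⊔ S) + finrank 𝕜 ↥(H ⊓ Sᗮ) = finrank 𝕜 E := by
    rw [← orthogonal_orthogonal H, inf_orthogonal, orthogonal_orthogonal]
    exact finrank_add_finrank_orthogonal _
  have := finrank_sup_add_finrank_inf_eq Hᗮ S
  have := finrank_add_finrank_orthogonal H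
  omega

end Submodule

namespace PiLp

section Module

variable {𝕜 ι : Type*} [Semiring 𝕜] {E : ι → Type*} [∀ i, SeminormedAddCommGroup (E i)]
  [∀ i, Module 𝕜 (E i)] (p : ℝ≥0∞)

def piSubmodule (K : ∀ i, Submodule 𝕜 (E i)) : Submodule 𝕜 (PiLp p E) :=
  ⨅ i, (K i).comap (projₗ p E i)

variable {p}

@[simp]
theorem mem_piSubmodule {K : ∀ i, Submodule 𝕜 (E i)} {x : PiLp p E} :
    x ∈ piSubmodule p K ↔ ∀ i, x i ∈ K i := by
  simp [piSubmodule]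

theorem le_piSubmodule_map_projₗ (W : Submodule 𝕜 (PiLp p E)) :
    W ≤ piSubmodule p fun i ↦ W.map (projₗ p E i) :=
  fun w hw ↦ mem_piSubmodule.2 fun _ ↦ ⟨w, hw, rfl⟩

end Module

theorem finrank_piSubmodule_le {𝕜 ι : Type*} [DivisionRing 𝕜] [Fintype ι] {E : ι → Type*}
    [∀ i, SeminormedAddCommGroup (E i)] [∀ i, Module 𝕜 (E i)] [∀ i, FiniteDimensional 𝕜 (E i)]
    {p : ℝ≥0∞} (K : ∀ i, Submodule 𝕜 (E i)) :
    finrank 𝕜 (piSubmodule p K) ≤ ∑ i, finrank 𝕜 (K i) := by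
  let restrict : piSubmodule p K →ₗ[𝕜] ∀ i, K i :=
    LinearMap.pi fun i ↦ ((projₗ p E i).comp (piSubmodule p K).subtype).codRestrict (K i)
      fun x ↦ mem_piSubmodule.1 x.2 i
  have hinj : Function.Injective restrict := fun x y hxy ↦
    Subtype.ext <| PiLp.ext fun i ↦ congrArg Subtype.val (congrFun hxy i)
  calc finrank 𝕜 (piSubmodule p K) ≤ finrank 𝕜 (∀ i, K i) :=
        LinearMap.finrank_le_finrank_of_injective hinj
    _ = ∑ i, finrank 𝕜 (K i) := finrank_pi_fintype 𝕜

section Inner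

variable {𝕜 ι : Type*} [RCLike 𝕜] [Fintype ι] {E : ι → Type*}
  [∀ i, NormedAddCommGroup (E i)] [∀ i, InnerProductSpace 𝕜 (E i)]

theorem inner_single_left [DecidableEq ι] (i : ι) (a : E i) (v : PiLp 2 E) :
    inner 𝕜 (single 2 i a) v = inner 𝕜 a (v i) := by
  rw [inner_apply, Finset.sum_eq_single i] <;> simp +contextual

theorem map_projₗ_orthogonal_piSubmodule_le (K : ∀ i, Submodule 𝕜 (E i)) (i : ι) :
    (piSubmodule 2 K)ᗮ.map (projₗ 2 E i) ≤ (K i)ᗮ := by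
  classical
  rintro _ ⟨v, hv, rfl⟩
  refine (Submodule.mem_orthogonal _ _).2 fun a ha ↦ ?_
  have hsingle : single 2 i a ∈ piSubmodule 2 K := mem_piSubmodule.2 fun j ↦ by
    rcases eq_or_ne j i with rfl | hji
    · simpa using ha
    · simp [hji]
  simpa [inner_single_left] using (Submodule.mem_orthogonal _ _).1 hv _ hsingle

end Inner

end PiLp

namespace ENNReal

theorem div_add_div_eq_self {p q : ℝ≥0∞} (hpq : 1 / p + 1 / q = 1) (a : ℝ≥0∞) :
    a / p + a / q = a := by
  rw [div_eq_mul_one_div a p, div_eq_mul_one_div a q, ← mul_add, hpq, mul_one]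

end ENNReal

theorem natCast_le_sum_div_conj_of_dimension_counts {ι : Type*} [Fintype ι] {h w v : ℕ}
    {k d e : ι → ℕ} {p q : ι → ℝ≥0∞} (hpq : ∀ i, 1 / p i + 1 / q i = 1)
    (hh : (h : ℝ≥0∞) = ∑ i, (e i : ℝ≥0∞) / p i) (hv : (v : ℝ≥0∞) ≤ ∑ i, (d i : ℝ≥0∞) / p i)
    (hde : ∀ i, d i + k i ≤ e i) (hhw : h + w ≤ v + ∑ i, k i) :
    (w : ℝ≥0∞) ≤ ∑ i, (k i : ℝ≥0∞) / q i := by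
  have hvk : (v : ℝ≥0∞) + ∑ i, (k i : ℝ≥0∞) / p i ≤ h := calc
    (v : ℝ≥0∞) + ∑ i, (k i : ℝ≥0∞) / p i ≤ ∑ i, ((d i + k i : ℕ) : ℝ≥0∞) / p i := by
      grw [hv]
      simp_rw [← Finset.sum_add_distrib, ENNReal.div_add_div_same, Nat.cast_add, le_refl]
    _ ≤ h := hh ▸ Finset.sum_le_sum fun i _ ↦ by gcongr; exact hde i
  refine (ENNReal.add_le_add_iff_left (natCast_ne_top h)).1 ?_
  calc (h : ℝ≥0∞) + w ≤ v + ∑ i, (k i : ℝ≥0∞) := by exact_mod_cast hhw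
    _ = (v + ∑ i, (k i : ℝ≥0∞) / p i) + ∑ i, (k i : ℝ≥0∞) / q i := by
      simp_rw [add_assoc, ← Finset.sum_add_distrib, ENNReal.div_add_div_eq_self (hpq _)]
    _ ≤ h + ∑ i, (k i : ℝ≥0∞) / q i := by grw [hvk]

theorem dual_dimension_condition_general {m : ℕ} {E : Fin m → Type*}
    [∀ j, NormedAddCommGroup (E j)] [∀ j, InnerProductSpace ℝ (E j)]
    [∀ j, FiniteDimensional ℝ (E j)]
    (H : Submodule ℝ (PiLp 2 E)) (p q : Fin m → ℝ≥0∞)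
    (hq : ∀ j, 1 / p j + 1 / q j = 1)
    (hscale : (finrank ℝ H : ℝ≥0∞) = ∑ j, (finrank ℝ (E j) : ℝ≥0∞) / p j)
    (hdim : ∀ V ≤ H, (finrank ℝ V : ℝ≥0∞)
      ≤ ∑ j, (finrank ℝ (V.map (PiLp.projₗ 2 E j)) : ℝ≥0∞) / p j) :
    ∀ W ≤ Hᗮ, (finrank ℝ W : ℝ≥0∞)
      ≤ ∑ j, (finrank ℝ (W.map (PiLp.projₗ 2 E j)) : ℝ≥0∞) / q j := by
  intro W hW
  set S : Submodule ℝ (PiLp 2 E) := PiLp.piSubmodule 2 fun j ↦ W.map (PiLp.projₗ 2 E j)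
  have hcount : finrank ℝ H + finrank ℝ W
      ≤ finrank ℝ ↥(H ⊓ Sᗮ) + ∑ j, finrank ℝ (W.map (PiLp.projₗ 2 E j)) := by
    have := H.finrank_add_finrank_orthogonal_inf S
    have : finrank ℝ W ≤ finrank ℝ ↥(Hᗮ ⊓ S) :=
      Submodule.finrank_mono (le_inf hW (PiLp.le_piSubmodule_map_projₗ W))
    have : finrank ℝ S ≤ _ := PiLp.finrank_piSubmodule_le _
    omega
  have hperp (j : Fin m) : finrank ℝ ((H ⊓ Sᗮ).map (PiLp.projₗ 2 E j))
      + finrank ℝ (W.map (PiLp.projₗ 2 E j)) ≤ finrank ℝ (E j) :=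
    Submodule.finrank_add_finrank_le_of_disjoint <|
      (Submodule.orthogonal_disjoint _).symm.mono_left <|
        (Submodule.map_mono inf_le_right).trans (PiLp.map_projₗ_orthogonal_piSubmodule_le _ j)
  exact natCast_le_sum_div_conj_of_dimension_counts hq hscale (hdim _ inf_le_left) hperp hcount

/-- The scaling and dimension conditions for the data `(H, p)` imply the
dimension condition for the dual data `(Hᗮ, p')`. -/
theorem dual_dimension_condition {m : ℕ} {E : Fin m → Type*}
    [∀ j, NormedAddCommGroup (E j)] [∀ j, InnerProductSpace ℝ (E j)]
    [∀ j, FiniteDimensional ℝ (E j)]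
    (H : Submodule ℝ (PiLp 2 E)) (p q : Fin m → ℝ≥0∞)
    (hp : ∀ j, 1 ≤ p j)
    (hq : ∀ j, 1 / p j + 1 / q j = 1)
    (hscale : (finrank ℝ H : ℝ≥0∞) = ∑ j, (finrank ℝ (E j) : ℝ≥0∞) / p j)
    (hdim : ∀ V ≤ H, (finrank ℝ V : ℝ≥0∞)
      ≤ ∑ j, (finrank ℝ (V.map (PiLp.projₗ 2 E j)) : ℝ≥0∞) / p j) :
    ∀ W ≤ Hᗮ, (finrank ℝ W : ℝ≥0∞)
      ≤ ∑ j, (finrank ℝ (W.map (PiLp.projₗ 2 E j)) : ℝ≥0∞) / q j :=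
  dual_dimension_condition_general H p q hq hscale hdim
end

section
/- Call Brascamp–Lieb data (H, p) simple if dim H = Σⱼ (dim Hⱼ)/pⱼ, dim V ≤ Σⱼ (dim πⱼV)/pⱼ for all subspaces V ≤ H, and moreover strict inequality holds for every nonzero proper subspace V of H. If all pⱼ ∈ (1,∞) and (H, p) is simple, then (H^⊥, p') is simple, where pⱼ' is the conjugate exponent of pⱼ. -/
/-!
Given `W ≤ Hᗮ`, let `K` be the subspace of vectors whose `j`-th coordinate is orthogonal to
`πⱼ W` for every `j`, and test the Brascamp–Lieb condition of `H` on `V = H ⊓ K`. Both `H` and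
`K` lie in `Wᗮ`, so `dim V ≥ dim H + ∑ⱼ (dim Hⱼ - dim πⱼ W) - dim Wᗮ`, while `πⱼ V ⟂ πⱼ W`
gives `dim πⱼ V ≤ dim Hⱼ - dim πⱼ W`. Combined with the scaling condition and
`1/qⱼ = 1 - 1/pⱼ`, the condition `dim V ≤ ∑ⱼ dim πⱼ V / pⱼ` turns into
`dim W ≤ ∑ⱼ dim πⱼ W / qⱼ`. The inequality is strict when `V` is a nonzero proper subspace of
`H`; `V = H` forces `W = ⊥`, and `V = ⊥` forces either a strict inequality or `πⱼ W = Hⱼ` for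
all `j`, in which case the right-hand side is `dim Hᗮ > dim W`.
-/

open Module

/-- Brascamp–Lieb data `(H, p)` (with finite exponents) is *simple* if the scaling condition
holds, the dimension condition holds for all subspaces of `H`, and the dimension inequality is
strict for every nonzero proper subspace of `H`. -/
def BLSimple {m : ℕ} {E : Fin m → Type*}
    [∀ j, NormedAddCommGroup (E j)] [∀ j, InnerProductSpace ℝ (E j)]
    [∀ j, FiniteDimensional ℝ (E j)]
    (H : Submodule ℝ (PiLp 2 E)) (p : Fin m → ℝ) : Prop :=
  ((finrank ℝ H : ℝ) = ∑ j, (finrank ℝ (E j) : ℝ) / p j) ∧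
  (∀ V ≤ H, (finrank ℝ V : ℝ)
      ≤ ∑ j, (finrank ℝ (V.map (PiLp.projₗ 2 E j)) : ℝ) / p j) ∧
  (∀ V ≤ H, V ≠ ⊥ → V ≠ H → (finrank ℝ V : ℝ)
      < ∑ j, (finrank ℝ (V.map (PiLp.projₗ 2 E j)) : ℝ) / p j)

theorem Submodule.finrank_add_finrank_le_finrank_inf_add {K V : Type*} [DivisionRing K]
    [AddCommGroup V] [Module K V] [FiniteDimensional K V] {U A B : Submodule K V}
    (hA : A ≤ U) (hB : B ≤ U) :
    finrank K A + finrank K B ≤ finrank K ↥(A ⊓ B) + finrank K U := by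
  rw [← Submodule.finrank_sup_add_finrank_inf_eq, add_comm]
  exact Nat.add_le_add_left (Submodule.finrank_mono (sup_le hA hB)) _

theorem Finset.sum_div_eq_sum_sub_sum_div {ι : Type*} (s : Finset ι) {p q : ι → ℝ}
    (hpq : ∀ j, 1 / p j + 1 / q j = 1) (x : ι → ℝ) :
    ∑ j ∈ s, x j / q j = ∑ j ∈ s, x j - ∑ j ∈ s, x j / p j := by
  rw [← Finset.sum_sub_distrib]
  refine Finset.sum_congr rfl fun j _ => ?_
  rw [div_eq_mul_one_div, eq_sub_of_add_eq' (hpq j)]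
  ring

theorem eq_of_le_of_sum_div_le {ι : Type*} [Fintype ι] {p x y : ι → ℝ} (hp : ∀ j, 0 < p j)
    (hxy : ∀ j, x j ≤ y j) (h : ∑ j, y j / p j ≤ ∑ j, x j / p j) (j : ι) : x j = y j := by
  have hle : ∀ j ∈ Finset.univ, x j / p j ≤ y j / p j := fun j _ =>
    div_le_div_of_nonneg_right (hxy j) (hp j).le
  have := (Finset.sum_eq_sum_iff_of_le hle).1 (le_antisymm (Finset.sum_le_sum hle) h) j
    (Finset.mem_univ j)
  exact (div_left_inj' (hp j).ne').1 this

namespace PiLp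

variable {𝕜 ι : Type*} {E : ι → Type*}

section Field

variable [Field 𝕜] [∀ j, SeminormedAddCommGroup (E j)] [∀ j, Module 𝕜 (E j)] {r : ENNReal}

theorem eq_bot_of_forall_map_projₗ_eq_bot {W : Submodule 𝕜 (PiLp r E)}
    (hW : ∀ j, W.map (projₗ r E j) = ⊥) : W = ⊥ := by
  refine (Submodule.eq_bot_iff W).2 fun w hw => PiLp.ext fun j => ?_
  simpa [hW j] using Submodule.mem_map_of_mem (f := projₗ r E j) hw

variable [Fintype ι] [∀ j, FiniteDimensional 𝕜 (E j)] (r)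

theorem finrank_eq_sum : finrank 𝕜 (PiLp r E) = ∑ j, finrank 𝕜 (E j) := by
  rw [(WithLp.linearEquiv r 𝕜 (∀ j, E j)).finrank_eq, finrank_pi_fintype]

theorem finrank_iInf_comap_projₗ_s4 (S : ∀ j, Submodule 𝕜 (E j)) :
    finrank 𝕜 (⨅ j, (S j).comap (projₗ r E j) : Submodule 𝕜 (PiLp r E))
      = ∑ j, finrank 𝕜 (S j) := by
  let e : (⨅ j, (S j).comap (projₗ r E j) : Submodule 𝕜 (PiLp r E)) ≃ₗ[𝕜] ∀ j, S j :=
    { toFun x j := ⟨x.1 j, Submodule.mem_iInf _ |>.1 x.2 j⟩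
      map_add' _ _ := rfl
      map_smul' _ _ := rfl
      invFun v := ⟨WithLp.toLp r fun j => (v j : E j), Submodule.mem_iInf _ |>.2 fun j => (v j).2⟩
      left_inv _ := rfl
      right_inv _ := rfl }
  rw [e.finrank_eq, finrank_pi_fintype]

end Field

theorem iInf_comap_orthogonal_map_projₗ_le_orthogonal [RCLike 𝕜] [Fintype ι]
    [∀ j, NormedAddCommGroup (E j)] [∀ j, InnerProductSpace 𝕜 (E j)]
    (W : Submodule 𝕜 (PiLp 2 E)) :
    ⨅ j, ((W.map (projₗ 2 E j))ᗮ).comap (projₗ 2 E j) ≤ Wᗮ := by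
  intro k hk
  rw [Submodule.mem_orthogonal]
  intro w hw
  rw [PiLp.inner_apply]
  refine Finset.sum_eq_zero fun j _ => ?_
  exact (Submodule.mem_orthogonal _ _).1 (Submodule.mem_iInf _ |>.1 hk j) (w j) ⟨w, hw, rfl⟩

end PiLp

section BrascampLieb

variable {m : ℕ} {E : Fin m → Type*} [∀ j, NormedAddCommGroup (E j)]
  [∀ j, InnerProductSpace ℝ (E j)] [∀ j, FiniteDimensional ℝ (E j)]

theorem finrank_orthogonal_eq_sum_div {H : Submodule ℝ (PiLp 2 E)} {p q : Fin m → ℝ}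
    (hpq : ∀ j, 1 / p j + 1 / q j = 1)
    (hscale : (finrank ℝ H : ℝ) = ∑ j, (finrank ℝ (E j) : ℝ) / p j) :
    (finrank ℝ Hᗮ : ℝ) = ∑ j, (finrank ℝ (E j) : ℝ) / q j := by
  have hsum := H.finrank_add_finrank_orthogonal
  rw [PiLp.finrank_eq_sum] at hsum
  rw [Finset.sum_div_eq_sum_sub_sum_div _ hpq, ← hscale, eq_sub_iff_add_eq', ← Nat.cast_add, hsum,
    Nat.cast_sum]

theorem exists_le_finrank_add_le_of_le_orthogonal {H W : Submodule ℝ (PiLp 2 E)}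
    (hW : W ≤ Hᗮ) :
    ∃ V ≤ H, finrank ℝ W + finrank ℝ H
        ≤ finrank ℝ V + ∑ j, finrank ℝ (W.map (PiLp.projₗ 2 E j)) ∧
      ∀ j, finrank ℝ (V.map (PiLp.projₗ 2 E j)) + finrank ℝ (W.map (PiLp.projₗ 2 E j))
        ≤ finrank ℝ (E j) := by
  set K := ⨅ j, ((W.map (PiLp.projₗ 2 E j))ᗮ).comap (PiLp.projₗ 2 E j)
  have hcompl j := (W.map (PiLp.projₗ 2 E j)).finrank_add_finrank_orthogonal
  refine ⟨H ⊓ K, inf_le_left, ?_, fun j => ?_⟩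
  · have hHW : H ≤ Wᗮ := Submodule.isOrtho_iff_le.1 (Submodule.isOrtho_iff_le.2 hW).symm
    have hdim : finrank ℝ H + finrank ℝ K ≤ finrank ℝ ↥(H ⊓ K) + finrank ℝ Wᗮ :=
      Submodule.finrank_add_finrank_le_finrank_inf_add hHW
        (PiLp.iInf_comap_orthogonal_map_projₗ_le_orthogonal W)
    have hK : finrank ℝ K = _ := PiLp.finrank_iInf_comap_projₗ_s4 2 _
    have hWWperp := W.finrank_add_finrank_orthogonal
    rw [PiLp.finrank_eq_sum, ← Finset.sum_congr rfl fun j _ => hcompl j,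
      Finset.sum_add_distrib] at hWWperp
    omega
  · have hVK : (H ⊓ K).map (PiLp.projₗ 2 E j) ≤ (W.map (PiLp.projₗ 2 E j))ᗮ :=
      Submodule.map_le_iff_le_comap.2 (inf_le_right.trans (iInf_le _ j))
    have hVdim := Submodule.finrank_mono hVK
    have hWdim := hcompl j
    omega

theorem eq_bot_of_sum_finrank_map_projₗ_div_nonpos {W : Submodule ℝ (PiLp 2 E)} {p : Fin m → ℝ}
    (hp : ∀ j, 0 < p j) (h : ∑ j, (finrank ℝ (W.map (PiLp.projₗ 2 E j)) : ℝ) / p j ≤ 0) :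
    W = ⊥ := by
  refine PiLp.eq_bot_of_forall_map_projₗ_eq_bot fun j => ?_
  have hzero := eq_of_le_of_sum_div_le (x := 0) hp (fun j => Nat.cast_nonneg _)
    (by simpa using h) j
  rwa [Pi.zero_apply, eq_comm, Nat.cast_eq_zero, Submodule.finrank_eq_zero] at hzero

theorem finrank_map_projₗ_eq_of_sum_div_le {W : Submodule ℝ (PiLp 2 E)} {p : Fin m → ℝ}
    (hp : ∀ j, 0 < p j)
    (h : ∑ j, (finrank ℝ (E j) : ℝ) / p j
      ≤ ∑ j, (finrank ℝ (W.map (PiLp.projₗ 2 E j)) : ℝ) / p j) (j : Fin m) :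
    finrank ℝ (W.map (PiLp.projₗ 2 E j)) = finrank ℝ (E j) := by
  exact_mod_cast eq_of_le_of_sum_div_le hp (fun j => by exact_mod_cast Submodule.finrank_le _) h j

theorem exists_le_finrank_sub_sum_div_le {H W : Submodule ℝ (PiLp 2 E)} {p q : Fin m → ℝ}
    (hp : ∀ j, 0 < p j) (hpq : ∀ j, 1 / p j + 1 / q j = 1)
    (hscale : (finrank ℝ H : ℝ) = ∑ j, (finrank ℝ (E j) : ℝ) / p j) (hW : W ≤ Hᗮ) :
    ∃ V ≤ H,
      (finrank ℝ W : ℝ) - ∑ j, (finrank ℝ (W.map (PiLp.projₗ 2 E j)) : ℝ) / q j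
        ≤ finrank ℝ V - finrank ℝ H + ∑ j, (finrank ℝ (W.map (PiLp.projₗ 2 E j)) : ℝ) / p j ∧
      ∑ j, (finrank ℝ (V.map (PiLp.projₗ 2 E j)) : ℝ) / p j
        ≤ finrank ℝ H - ∑ j, (finrank ℝ (W.map (PiLp.projₗ 2 E j)) : ℝ) / p j := by
  obtain ⟨V, hVH, hWV, hVW⟩ := exists_le_finrank_add_le_of_le_orthogonal hW
  refine ⟨V, hVH, ?_, ?_⟩
  · rw [Finset.sum_div_eq_sum_sub_sum_div _ hpq]
    have : (finrank ℝ W + finrank ℝ H : ℝ)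
        ≤ finrank ℝ V + ∑ j, (finrank ℝ (W.map (PiLp.projₗ 2 E j)) : ℝ) := by
      exact_mod_cast hWV
    linarith
  · rw [hscale, ← Finset.sum_sub_distrib]
    refine Finset.sum_le_sum fun j _ => ?_
    rw [← sub_div]
    refine div_le_div_of_nonneg_right ?_ (hp j).le
    rw [le_sub_iff_add_le]
    exact_mod_cast hVW j

end BrascampLieb

/-- If all `pⱼ ∈ (1,∞)` and `(H, p)` is simple, then the dual data
`(Hᗮ, p')` is simple. -/
theorem dual_simple {m : ℕ} {E : Fin m → Type*}
    [∀ j, NormedAddCommGroup (E j)] [∀ j, InnerProductSpace ℝ (E j)]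
    [∀ j, FiniteDimensional ℝ (E j)]
    (H : Submodule ℝ (PiLp 2 E)) (p q : Fin m → ℝ)
    (hp : ∀ j, 1 < p j)
    (hq : ∀ j, 1 / p j + 1 / q j = 1)
    (hsimple : BLSimple H p) :
    BLSimple Hᗮ q := by
  obtain ⟨hscale, hdim, hstrict⟩ := hsimple
  have hp0 j : 0 < p j := one_pos.trans (hp j)
  have hscale' := finrank_orthogonal_eq_sum_div hq hscale
  refine ⟨hscale', fun W hW => ?_, fun W hW hW0 hWH => ?_⟩
  · obtain ⟨V, hVH, hWV, hVW⟩ := exists_le_finrank_sub_sum_div_le hp0 hq hscale hW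
    linarith [hdim V hVH]
  obtain ⟨V, hVH, hWV, hVW⟩ := exists_le_finrank_sub_sum_div_le hp0 hq hscale hW
  rcases eq_or_ne V H with rfl | hVH'
  · exact absurd (eq_bot_of_sum_finrank_map_projₗ_div_nonpos hp0 (by linarith [hdim V le_rfl]))
      hW0
  rcases eq_or_ne V ⊥ with rfl | hV0
  · by_contra hle
    have hfull := finrank_map_projₗ_eq_of_sum_div_le hp0 (W := W)
      (by rw [finrank_bot] at hWV; linarith)
    have hlt : finrank ℝ W < finrank ℝ Hᗮ :=
      Submodule.finrank_lt_finrank_of_lt (hW.lt_of_ne hWH)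
    simp only [hfull, ← hscale'] at hle
    exact hle (by exact_mod_cast hlt)
  linarith [hstrict V hVH hV0 hVH']
end

section
/- Let G and G₁,…,Gₘ be finite groups equipped with counting measure, φⱼ : G → Gⱼ homomorphisms, and s₁,…,sₘ ∈ [0,1]. Define the Brascamp–Lieb functional BL(φ,s;f) = (Σ_{x∈G} ∏ⱼ fⱼ(φⱼ(x))^{sⱼ}) / ∏ⱼ (Σ_{xⱼ∈Gⱼ} fⱼ(xⱼ))^{sⱼ} for nonnegative not-identically-zero fⱼ, and BL(φ,s) = sup over such f. Then BL(φ,s;f) · BL(φ,s;g) ≤ BL(φ,s) · BL(φ,s;f∗g), where (f∗g)ⱼ = fⱼ ∗ gⱼ is convolution on Gⱼ. -/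
open Finset

/-- Convolution on a finite group with counting measure:
`(f ∗ g)(x) = Σ_y f(y) g(xy⁻¹)`. -/
noncomputable def conv {G : Type*} [Group G] [Fintype G] (f g : G → ℝ) : G → ℝ :=
  fun x => ∑ y, f y * g (x * y⁻¹)

/-- The Brascamp–Lieb functional on finite groups:
`BL(φ,s;f) = (Σ_{x∈G} ∏ⱼ fⱼ(φⱼ(x))^{sⱼ}) / ∏ⱼ (Σ_{Gⱼ} fⱼ)^{sⱼ}`. -/
noncomputable def BLfun {m : ℕ} {G : Type*} {K : Fin m → Type*} [Group G] [Fintype G]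
    [∀ j, Group (K j)] [∀ j, Fintype (K j)]
    (φ : ∀ j, G →* K j) (s : Fin m → ℝ) (f : ∀ j, K j → ℝ) : ℝ :=
  (∑ x, ∏ j, f j (φ j x) ^ s j) / ∏ j, (∑ y, f j y) ^ s j

/-- The Brascamp–Lieb constant on finite groups: the supremum of the Brascamp–Lieb
functional over nonnegative, not identically zero inputs. -/
noncomputable def BLconst {m : ℕ} {G : Type*} {K : Fin m → Type*} [Group G] [Fintype G]
    [∀ j, Group (K j)] [∀ j, Fintype (K j)]
    (φ : ∀ j, G →* K j) (s : Fin m → ℝ) : ℝ :=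
  sSup {c : ℝ | ∃ f : ∀ j, K j → ℝ,
    (∀ j x, 0 ≤ f j x) ∧ (∀ j, f j ≠ 0) ∧ c = BLfun φ s f}

section Aux

variable {m : ℕ} {G : Type*} {K : Fin m → Type*} [Group G] [Fintype G]
    [∀ j, Group (K j)] [∀ j, Fintype (K j)]
    (φ : ∀ j, G →* K j) (s : Fin m → ℝ)

lemma sum_pos_of_ne_zero {A : Type*} [Fintype A] [Nonempty A] {h : A → ℝ}
    (h0 : ∀ x, 0 ≤ h x) (hne : h ≠ 0) : 0 < ∑ y, h y := by
  obtain ⟨y, hy⟩ := Function.ne_iff.mp hne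
  exact Finset.sum_pos' (fun i _ => h0 i)
    ⟨y, Finset.mem_univ y, lt_of_le_of_ne (h0 y) (Ne.symm hy)⟩

lemma blfun_le_card (hs0 : ∀ j, 0 ≤ s j) (f : ∀ j, K j → ℝ)
    (hf : ∀ j x, 0 ≤ f j x) (hf' : ∀ j, f j ≠ 0) :
    BLfun φ s f ≤ Fintype.card G := by
  have hD : 0 < ∏ j, (∑ y, f j y) ^ s j :=
    Finset.prod_pos fun j _ =>
      Real.rpow_pos_of_pos (sum_pos_of_ne_zero (hf j) (hf' j)) _
  rw [BLfun, div_le_iff₀ hD]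
  calc ∑ x, ∏ j, f j (φ j x) ^ s j
      ≤ ∑ _x : G, ∏ j, (∑ y, f j y) ^ s j := by
        refine Finset.sum_le_sum fun x _ => Finset.prod_le_prod
          (fun j _ => Real.rpow_nonneg (hf j _) _)
          (fun j _ => Real.rpow_le_rpow (hf j _)
            (Finset.single_le_sum (fun y _ => hf j y) (Finset.mem_univ _)) (hs0 j))
    _ = (Fintype.card G : ℝ) * ∏ j, (∑ y, f j y) ^ s j := by
        rw [Finset.sum_const, Finset.card_univ, nsmul_eq_mul]

lemma blconst_bdd (hs0 : ∀ j, 0 ≤ s j) :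
    BddAbove {c : ℝ | ∃ f : ∀ j, K j → ℝ,
      (∀ j x, 0 ≤ f j x) ∧ (∀ j, f j ≠ 0) ∧ c = BLfun φ s f} := by
  refine ⟨Fintype.card G, ?_⟩
  rintro c ⟨f, hf, hf', rfl⟩
  exact blfun_le_card φ s hs0 f hf hf'

lemma blfun_le_blconst (hs0 : ∀ j, 0 ≤ s j) (f : ∀ j, K j → ℝ)
    (hf : ∀ j x, 0 ≤ f j x) (hf' : ∀ j, f j ≠ 0) :
    BLfun φ s f ≤ BLconst φ s :=
  le_csSup (blconst_bdd φ s hs0) ⟨f, hf, hf', rfl⟩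

lemma blconst_nonneg (hs0 : ∀ j, 0 ≤ s j) : 0 ≤ BLconst φ s := by
  have h1 : (0:ℝ) ≤ BLfun φ s (fun _ _ => 1) := by
    refine div_nonneg (Finset.sum_nonneg fun x _ => Finset.prod_nonneg
      fun j _ => Real.rpow_nonneg zero_le_one _)
      (Finset.prod_nonneg fun j _ => Real.rpow_nonneg
        (Finset.sum_nonneg fun y _ => zero_le_one) _)
  refine h1.trans (blfun_le_blconst φ s hs0 _ (fun j x => zero_le_one) fun j => ?_)
  intro h
  exact one_ne_zero (congrFun h 1)

lemma key_bound (hs0 : ∀ j, 0 ≤ s j) (h : ∀ j, K j → ℝ) (hh : ∀ j x, 0 ≤ h j x) :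
    (∑ x, ∏ j, h j (φ j x) ^ s j) ≤ BLconst φ s * ∏ j, (∑ y, h j y) ^ s j := by
  classical
  by_cases hz : ∃ j, h j = 0 ∧ 0 < s j
  · obtain ⟨j0, hj0, hsj0⟩ := hz
    have hL : (∑ x, ∏ j, h j (φ j x) ^ s j) = 0 := by
      refine Finset.sum_eq_zero fun x _ => Finset.prod_eq_zero (Finset.mem_univ j0) ?_
      rw [hj0]
      simp [Real.zero_rpow hsj0.ne']
    rw [hL]
    exact mul_nonneg (blconst_nonneg φ s hs0) (Finset.prod_nonneg fun j _ =>
      Real.rpow_nonneg (Finset.sum_nonneg fun y _ => hh j y) _)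
  · push_neg at hz
    have hz' : ∀ j, h j = 0 → s j = 0 := by
      intro j hj
      have := hz j hj
      have := hs0 j
      linarith
    set h' : ∀ j, K j → ℝ := fun j => if h j = 0 then (fun _ => 1) else h j with hh'def
    have h'0 : ∀ j x, 0 ≤ h' j x := by
      intro j x; by_cases hj : h j = 0 <;> simp [h', hj, hh j x]
    have h'ne : ∀ j, h' j ≠ 0 := by
      intro j
      by_cases hj : h j = 0
      · simp only [h', hj, if_pos]
        intro hcon
        exact one_ne_zero (congrFun hcon 1)
      · simpa [h', hj] using hj
    have hnum : ∀ x, ∏ j, h' j (φ j x) ^ s j = ∏ j, h j (φ j x) ^ s j := by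
      intro x
      refine Finset.prod_congr rfl fun j _ => ?_
      by_cases hj : h j = 0
      · simp [h', hj, hz' j hj]
      · simp [h', hj]
    have hden : ∏ j, (∑ y, h' j y) ^ s j = ∏ j, (∑ y, h j y) ^ s j := by
      refine Finset.prod_congr rfl fun j _ => ?_
      by_cases hj : h j = 0
      · simp [h', hj, hz' j hj]
      · simp [h', hj]
    have hle := blfun_le_blconst φ s hs0 h' h'0 h'ne
    have hD' : 0 < ∏ j, (∑ y, h' j y) ^ s j :=
      Finset.prod_pos fun j _ =>
        Real.rpow_pos_of_pos (sum_pos_of_ne_zero (h'0 j) (h'ne j)) _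
    rw [BLfun, div_le_iff₀ hD'] at hle
    calc (∑ x, ∏ j, h j (φ j x) ^ s j)
        = ∑ x, ∏ j, h' j (φ j x) ^ s j := by
          exact (Finset.sum_congr rfl fun x _ => hnum x).symm
      _ ≤ BLconst φ s * ∏ j, (∑ y, h' j y) ^ s j := hle
      _ = BLconst φ s * ∏ j, (∑ y, h j y) ^ s j := by rw [hden]

end Aux

/-- abstract Ball inequality. For finite groups and nonnegative nonzero
inputs `f`, `g`, one has `BL(φ,s;f)·BL(φ,s;g) ≤ BL(φ,s)·BL(φ,s;f∗g)`. -/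
theorem ball_inequality {m : ℕ} {G : Type*} {K : Fin m → Type*} [Group G] [Fintype G]
    [∀ j, Group (K j)] [∀ j, Fintype (K j)]
    (φ : ∀ j, G →* K j) (s : Fin m → ℝ) (hs : ∀ j, s j ∈ Set.Icc (0 : ℝ) 1)
    (f g : ∀ j, K j → ℝ)
    (hf : ∀ j x, 0 ≤ f j x) (hf' : ∀ j, f j ≠ 0)
    (hg : ∀ j x, 0 ≤ g j x) (hg' : ∀ j, g j ≠ 0) :
    BLfun φ s f * BLfun φ s g
      ≤ BLconst φ s * BLfun φ s (fun j => conv (f j) (g j)) := by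
  classical
  have hs0 : ∀ j, 0 ≤ s j := fun j => (hs j).1
  have hfs : ∀ j, 0 < ∑ y, f j y := fun j => sum_pos_of_ne_zero (hf j) (hf' j)
  have hgs : ∀ j, 0 < ∑ y, g j y := fun j => sum_pos_of_ne_zero (hg j) (hg' j)
  have Dfpos : 0 < ∏ j, (∑ y, f j y) ^ s j :=
    Finset.prod_pos fun j _ => Real.rpow_pos_of_pos (hfs j) _
  have Dgpos : 0 < ∏ j, (∑ y, g j y) ^ s j :=
    Finset.prod_pos fun j _ => Real.rpow_pos_of_pos (hgs j) _
  have hconv_sum : ∀ j, (∑ y, conv (f j) (g j) y) = (∑ y, f j y) * (∑ y, g j y) := by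
    intro j
    simp only [conv]
    calc ∑ u, ∑ v, f j v * g j (u * v⁻¹)
        = ∑ v, ∑ u, f j v * g j (u * v⁻¹) := Finset.sum_comm
      _ = ∑ v, f j v * ∑ u, g j (u * v⁻¹) := by
          refine Finset.sum_congr rfl fun v _ => ?_
          rw [Finset.mul_sum]
      _ = ∑ v, f j v * ∑ w, g j w := by
          refine Finset.sum_congr rfl fun v _ => ?_
          congr 1
          exact Fintype.sum_equiv (Equiv.mulRight v⁻¹) _ _ fun u => rfl
      _ = (∑ v, f j v) * ∑ w, g j w := (Finset.sum_mul _ _ _).symm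
  have key : (∑ x, ∏ j, f j (φ j x) ^ s j) * (∑ x, ∏ j, g j (φ j x) ^ s j)
      ≤ BLconst φ s * ∑ z, ∏ j, conv (f j) (g j) (φ j z) ^ s j := by
    calc (∑ x, ∏ j, f j (φ j x) ^ s j) * (∑ y, ∏ j, g j (φ j y) ^ s j)
        = ∑ x, ∑ y, ∏ j, (f j (φ j x) * g j (φ j y)) ^ s j := by
          rw [Finset.sum_mul_sum]
          refine Finset.sum_congr rfl fun x _ => Finset.sum_congr rfl fun y _ => ?_
          rw [← Finset.prod_mul_distrib]
          exact Finset.prod_congr rfl fun j _ => (Real.mul_rpow (hf j _) (hg j _)).symm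
      _ = ∑ x, ∑ z, ∏ j, (f j (φ j x) * g j (φ j z * (φ j x)⁻¹)) ^ s j := by
          refine Finset.sum_congr rfl fun x _ => ?_
          refine Fintype.sum_equiv (Equiv.mulRight x) _ _ fun y => ?_
          refine Finset.prod_congr rfl fun j _ => ?_
          simp [map_mul, mul_assoc]
      _ = ∑ z, ∑ x, ∏ j, (f j (φ j x) * g j (φ j z * (φ j x)⁻¹)) ^ s j := Finset.sum_comm
      _ ≤ ∑ z, BLconst φ s * ∏ j, (∑ k, f j k * g j (φ j z * k⁻¹)) ^ s j := by
          refine Finset.sum_le_sum fun z _ => ?_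
          exact key_bound φ s hs0 (fun j k => f j k * g j (φ j z * k⁻¹))
            (fun j k => mul_nonneg (hf j k) (hg j _))
      _ = BLconst φ s * ∑ z, ∏ j, conv (f j) (g j) (φ j z) ^ s j := by
          rw [← Finset.mul_sum]
          rfl
  have hDconv : ∏ j, (∑ y, conv (f j) (g j) y) ^ s j
      = (∏ j, (∑ y, f j y) ^ s j) * ∏ j, (∑ y, g j y) ^ s j := by
    rw [← Finset.prod_mul_distrib]
    refine Finset.prod_congr rfl fun j _ => ?_
    rw [hconv_sum j, Real.mul_rpow (hfs j).le (hgs j).le]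
  rw [BLfun, BLfun, BLfun, hDconv, div_mul_div_comm, ← mul_div_assoc]
  exact (div_le_div_iff_of_pos_right (mul_pos Dfpos Dgpos)).mpr key
end

section
/- Let G be a finite group and f : G → [0,∞) with Σ_{x∈G} f(x) = 1. Then there exist a subgroup Γ of G and a positive integer k₀ such that the iterated convolutions f^{(ℓk₀)} converge pointwise to (1/|Γ|)·χ_Γ as ℓ → ∞, where f^{(n)} denotes the n-fold convolution of f with itself and χ_Γ is the indicator function of Γ. -/
open Finset Filter

/-- The `n`-fold iterated convolution of `f` with itself (`convPow f 0` is the unit `δ_e`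
for convolution, so `convPow f 1 = f`). -/
noncomputable def convPow {G : Type*} [Group G] [Fintype G] [DecidableEq G]
    (f : G → ℝ) : ℕ → G → ℝ
  | 0 => fun x => if x = 1 then 1 else 0
  | n + 1 => conv (convPow f n) f

set_option linter.unusedSectionVars false
set_option linter.unusedVariables false
set_option maxHeartbeats 1000000

section aux
variable {G : Type*} [Group G] [Fintype G] [DecidableEq G]

lemma conv_nonneg' {f g : G → ℝ} (hf : ∀ x, 0 ≤ f x) (hg : ∀ x, 0 ≤ g x) :
    ∀ x, 0 ≤ conv f g x := fun x =>
  Finset.sum_nonneg fun y _ => mul_nonneg (hf y) (hg _)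

lemma convPow_nonneg {f : G → ℝ} (hf : ∀ x, 0 ≤ f x) : ∀ n x, 0 ≤ convPow f n x
  | 0, x => by simp only [convPow]; split <;> norm_num
  | n + 1, x => conv_nonneg' (convPow_nonneg hf n) hf x

lemma sum_conv (f g : G → ℝ) : ∑ x, conv f g x = (∑ x, f x) * (∑ x, g x) := by
  unfold conv
  rw [Finset.sum_comm, Finset.sum_mul]
  refine Finset.sum_congr rfl fun y _ => ?_
  rw [← Finset.mul_sum]
  congr 1
  exact Fintype.sum_bijective (fun x => x * y⁻¹)
    ((Equiv.mulRight y⁻¹).bijective) _ _ (fun x => rfl)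

lemma sum_convPow {f : G → ℝ} (hsum : ∑ x, f x = 1) : ∀ n, ∑ x, convPow f n x = 1
  | 0 => by simp [convPow]
  | n + 1 => by
    show ∑ x, conv (convPow f n) f x = 1
    rw [sum_conv, sum_convPow hsum n, hsum, mul_one]

lemma conv_delta (f : G → ℝ) :
    conv f (fun x => if x = (1:G) then (1:ℝ) else 0) = f := by
  funext x
  unfold conv
  have : ∀ y : G, f y * (if x * y⁻¹ = 1 then (1:ℝ) else 0)
      = if y = x then f y else 0 := by
    intro y
    by_cases h : y = x
    · subst h; simp
    · have : ¬ (x * y⁻¹ = 1) := by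
        simp [mul_inv_eq_one]; exact fun hh => h hh.symm
      simp [h, this]
  rw [Finset.sum_congr rfl fun y _ => this y]
  simp

lemma delta_conv (f : G → ℝ) :
    conv (fun x => if x = (1:G) then (1:ℝ) else 0) f = f := by
  funext x
  unfold conv
  have : ∀ y : G, (if y = (1:G) then (1:ℝ) else 0) * f (x * y⁻¹)
      = if y = 1 then f (x * y⁻¹) else 0 := by
    intro y; by_cases h : y = (1:G) <;> simp [h]
  rw [Finset.sum_congr rfl fun y _ => this y, Finset.sum_ite_eq' univ (1:G)]
  simp

lemma conv_assoc (a b c : G → ℝ) : conv (conv a b) c = conv a (conv b c) := by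
  funext x
  unfold conv
  simp only [Finset.sum_mul, Finset.mul_sum]
  rw [Finset.sum_comm]
  refine Finset.sum_congr rfl fun z _ => ?_
  refine (Fintype.sum_bijective (fun w => w * z) ((Equiv.mulRight z).bijective) _ _ fun w => ?_).symm
  simp [mul_assoc, mul_inv_rev]

lemma convPow_add (f : G → ℝ) (n : ℕ) : ∀ m,
    convPow f (n + m) = conv (convPow f n) (convPow f m)
  | 0 => by rw [Nat.add_zero]; exact (conv_delta _).symm
  | m + 1 => by
    show convPow f ((n + m) + 1) = _
    show conv (convPow f (n + m)) f = _
    rw [convPow_add f n m, conv_assoc]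
    rfl

lemma convPow_one (f : G → ℝ) : convPow f 1 = f := by
  show conv (convPow f 0) f = f
  exact delta_conv f

lemma convPow_mul (f : G → ℝ) (k : ℕ) : ∀ ℓ,
    convPow f (ℓ * k) = convPow (convPow f k) ℓ
  | 0 => by simp [convPow]
  | ℓ + 1 => by
    have h : (ℓ + 1) * k = ℓ * k + k := by ring
    rw [h, convPow_add, convPow_mul f k ℓ]
    rfl

lemma conv_pos_iff {p q : G → ℝ} (hp : ∀ x, 0 ≤ p x) (hq : ∀ x, 0 ≤ q x) (x : G) :
    0 < conv p q x ↔ ∃ y, 0 < p y ∧ 0 < q (x * y⁻¹) := by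
  constructor
  · intro h
    by_contra hc
    push_neg at hc
    have hz : conv p q x = 0 := by
      unfold conv
      refine Finset.sum_eq_zero fun y _ => ?_
      rcases lt_or_eq_of_le (hp y) with hy | hy
      · have h2 := hc y hy
        have : q (x * y⁻¹) = 0 := le_antisymm h2 (hq _)
        rw [this, mul_zero]
      · rw [← hy, zero_mul]
    exact absurd hz (ne_of_gt h)
  · rintro ⟨y, h1, h2⟩
    unfold conv
    exact Finset.sum_pos' (fun z _ => mul_nonneg (hp z) (hq _))
      ⟨y, Finset.mem_univ y, mul_pos h1 h2⟩

lemma nat_exists_eq_succ {c : ℕ → ℕ} (mono : ∀ j, c j ≤ c (j + 1)) (N : ℕ)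
    (bd : ∀ j, c j ≤ N) : ∃ j, c j = c (j + 1) := by
  by_contra h
  push_neg at h
  have hstep : ∀ j, c j + 1 ≤ c (j + 1) := fun j => lt_of_le_of_ne (mono j) (h j)
  have hle : ∀ j, j ≤ c j := by
    intro j
    induction j with
    | zero => exact Nat.zero_le _
    | succ n ih => exact le_trans (Nat.succ_le_succ ih) (hstep n)
  have := hle (N + 1); have := bd (N + 1); omega

open scoped Classical in
/-- The support of the `n`-th convolution power, as a finset. -/
noncomputable def suppPow (f : G → ℝ) (n : ℕ) : Finset G :=
  univ.filter (fun x => 0 < convPow f n x)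

lemma mem_suppPow {f : G → ℝ} {n : ℕ} {x : G} :
    x ∈ suppPow f n ↔ 0 < convPow f n x := by
  classical simp [suppPow]

lemma mem_suppPow_add {f : G → ℝ} (hf : ∀ x, 0 ≤ f x) {n m : ℕ} {x : G} :
    x ∈ suppPow f (n + m) ↔ ∃ b ∈ suppPow f m, ∃ a ∈ suppPow f n, x = b * a := by
  rw [mem_suppPow, convPow_add,
    conv_pos_iff (convPow_nonneg hf n) (convPow_nonneg hf m)]
  constructor
  · rintro ⟨y, h1, h2⟩
    exact ⟨x * y⁻¹, mem_suppPow.2 h2, y, mem_suppPow.2 h1, by group⟩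
  · rintro ⟨b, hb, a, ha, rfl⟩
    refine ⟨a, mem_suppPow.1 ha, ?_⟩
    have : b * a * a⁻¹ = b := by group
    rw [this]
    exact mem_suppPow.1 hb

lemma one_mem_suppPow_zero (f : G → ℝ) : (1:G) ∈ suppPow f 0 := by
  rw [mem_suppPow]
  show (0:ℝ) < if (1:G) = 1 then 1 else 0
  simp

lemma one_mem_suppPow_mul {f : G → ℝ} (hf : ∀ x, 0 ≤ f x) {n₀ : ℕ}
    (h1 : (1:G) ∈ suppPow f n₀) : ∀ j, (1:G) ∈ suppPow f (j * n₀)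
  | 0 => by simpa using one_mem_suppPow_zero f
  | j + 1 => by
    have h : (j + 1) * n₀ = j * n₀ + n₀ := by ring
    rw [h, mem_suppPow_add hf]
    exact ⟨1, h1, 1, one_mem_suppPow_mul hf h1 j, (one_mul _).symm⟩

lemma suppPow_subset_add {f : G → ℝ} (hf : ∀ x, 0 ≤ f x) {n m : ℕ}
    (h1 : (1:G) ∈ suppPow f m) : suppPow f n ⊆ suppPow f (n + m) := by
  intro x hx
  rw [mem_suppPow_add hf]
  exact ⟨1, h1, x, hx, (one_mul x).symm⟩

lemma suppPow_determined {f : G → ℝ} (hf : ∀ x, 0 ≤ f x) {m m' : ℕ}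
    (h : suppPow f m = suppPow f m') (i : ℕ) :
    suppPow f (m + i) = suppPow f (m' + i) := by
  ext x
  rw [mem_suppPow_add hf, mem_suppPow_add hf, h]

end aux

/-- For a normalised nonnegative function `f` on a finite group `G`, there
are a subgroup `Γ ≤ G` and a positive integer `k₀` such that `f^{(ℓk₀)} → (1/|Γ|)·χ_Γ`
pointwise as `ℓ → ∞`. -/
theorem convPow_tendsto_subgroup {G : Type*} [Group G] [Fintype G] [DecidableEq G]
    (f : G → ℝ) (hf : ∀ x, 0 ≤ f x) (hsum : ∑ x, f x = 1) :
    ∃ (Γ : Subgroup G) (k₀ : ℕ), 0 < k₀ ∧ ∀ x : G,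
      Tendsto (fun ℓ : ℕ => convPow f (ℓ * k₀) x) atTop
        (nhds (Set.indicator (Γ : Set G) (fun _ => (Nat.card Γ : ℝ)⁻¹) x)) := by
  classical
  -- an element of positive mass
  obtain ⟨s, hs⟩ : ∃ s : G, 0 < f s := by
    by_contra h
    push_neg at h
    have : ∑ x, f x = 0 := Finset.sum_eq_zero fun x _ => le_antisymm (h x) (hf x)
    rw [hsum] at this; norm_num at this
  set n₀ := orderOf s with hn₀def
  have hn₀ : 0 < n₀ := orderOf_pos s
  -- 1 is in the support of convPow f n₀
  have hspow : ∀ n : ℕ, 0 < convPow f n (s ^ n) := by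
    intro n
    induction n with
    | zero => simpa using (one_mem_suppPow_zero f |> mem_suppPow.1)
    | succ n ih =>
      show 0 < conv (convPow f n) f (s ^ (n+1))
      rw [conv_pos_iff (convPow_nonneg hf n) hf]
      refine ⟨s ^ n, ih, ?_⟩
      have : s ^ (n+1) * (s ^ n)⁻¹ = s := by
        rw [pow_succ']
        exact mul_inv_cancel_right s (s ^ n)
      rw [this]; exact hs
  have h1 : (1:G) ∈ suppPow f n₀ := by
    rw [mem_suppPow]
    have := hspow n₀
    rwa [pow_orderOf_eq_one s] at this
  -- stabilisation of the supports along multiples of n₀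
  have hmono : ∀ j : ℕ, suppPow f ((j+1) * n₀) ⊆ suppPow f ((j+2) * n₀) := by
    intro j
    have h : (j+2) * n₀ = (j+1) * n₀ + n₀ := by ring
    rw [h]
    exact suppPow_subset_add hf h1
  obtain ⟨j, hj⟩ := nat_exists_eq_succ
    (c := fun j => (suppPow f ((j+1) * n₀)).card)
    (fun j => Finset.card_le_card (hmono j)) (Fintype.card G)
    (fun j => Finset.card_le_univ _)
  set k := (j+1) * n₀ with hkdef
  have hk : 0 < k := Nat.mul_pos (Nat.succ_pos j) hn₀
  have hTeq : suppPow f k = suppPow f (k + n₀) := by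
    have h2 : (j + 1 + 1) * n₀ = k + n₀ := by rw [hkdef]; ring
    refine Finset.eq_of_subset_of_card_le ?_ ?_
    · rw [← h2]; exact hmono j
    · rw [← h2]; exact le_of_eq hj.symm
  have hstab : ∀ i : ℕ, suppPow f (k + i * n₀) = suppPow f k := by
    intro i
    induction i with
    | zero => simp
    | succ i ih =>
      have h : k + (i+1) * n₀ = (k + i * n₀) + n₀ := by ring
      rw [h, suppPow_determined hf ih n₀, ← hTeq]
  have h2k : suppPow f (k + k) = suppPow f k := by
    have : k + k = k + (j+1) * n₀ := by rw [hkdef]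
    rw [this, hstab]
  -- closure properties of the support of convPow f k
  have hone : (1:G) ∈ suppPow f k := one_mem_suppPow_mul hf h1 (j+1)
  have hmul : ∀ a ∈ suppPow f k, ∀ b ∈ suppPow f k, a * b ∈ suppPow f k := by
    intro a ha b hb
    rw [← h2k, mem_suppPow_add hf]
    exact ⟨a, ha, b, hb, rfl⟩
  have hpowmem : ∀ x ∈ suppPow f k, ∀ m : ℕ, x ^ m ∈ suppPow f k := by
    intro x hx m
    induction m with
    | zero => simpa using hone
    | succ m ih => rw [pow_succ]; exact hmul _ ih _ hx
  have hinv : ∀ x ∈ suppPow f k, x⁻¹ ∈ suppPow f k := by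
    intro x hx
    have ho : 0 < orderOf x := orderOf_pos x
    have hxe : x ^ (orderOf x - 1) * x = 1 := by
      rw [← pow_succ, Nat.sub_add_cancel ho, pow_orderOf_eq_one]
    have : x⁻¹ = x ^ (orderOf x - 1) := (eq_inv_of_mul_eq_one_left hxe).symm
    rw [this]
    exact hpowmem x hx _
  -- the subgroup Γ
  set Γ : Subgroup G :=
    { carrier := {x : G | 0 < convPow f k x}
      mul_mem' := fun {a b} ha hb => mem_suppPow.1 (hmul a (mem_suppPow.2 ha) b (mem_suppPow.2 hb))
      one_mem' := mem_suppPow.1 hone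
      inv_mem' := fun {a} ha => mem_suppPow.1 (hinv a (mem_suppPow.2 ha)) } with hΓdef
  have hΓcoe : (Γ : Set G) = {x : G | 0 < convPow f k x} := rfl
  refine ⟨Γ, k, hk, ?_⟩
  set Γfin := suppPow f k with hΓfin
  set g : G → ℝ := convPow f k with hgdef
  have memΓfin : ∀ x : G, x ∈ Γfin ↔ 0 < g x := fun x => mem_suppPow
  -- cardinality
  set N := Γfin.card with hN
  have hNpos : 0 < N := Finset.card_pos.2 ⟨1, hone⟩
  have hcard : (Nat.card ↥Γ : ℝ) = (N : ℝ) := by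
    congr 1
    have h' : Nat.card ↥Γ = Nat.card ({x : G | 0 < convPow f k x} : Set G) := rfl
    rw [h', Nat.card_coe_set_eq]
    have hset : ({x : G | 0 < convPow f k x} : Set G) = (Γfin : Set G) := by
      ext x; simp [memΓfin x, hgdef]
    rw [hset, Set.ncard_coe_finset]
  set u : ℝ := (N : ℝ)⁻¹ with hu
  have hupos : 0 < u := inv_pos.2 (by exact_mod_cast hNpos)
  have hule : u ≤ 1 := by
    rw [hu]
    apply inv_le_one_of_one_le₀
    exact_mod_cast hNpos
  -- basic facts about g
  have hgnn : ∀ x, 0 ≤ g x := convPow_nonneg hf k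
  have hgzero : ∀ x, x ∉ Γfin → g x = 0 := by
    intro x hx
    by_contra h
    exact hx ((memΓfin x).2 (lt_of_le_of_ne (hgnn x) (Ne.symm h)))
  have hgsum : ∑ x, g x = 1 := sum_convPow hsum k
  have hxyinv : ∀ x ∈ Γfin, ∀ y ∈ Γfin, x * y⁻¹ ∈ Γfin := fun x hx y hy =>
    hmul x hx y⁻¹ (hinv y hy)
  -- iterates
  set μ : ℕ → G → ℝ := convPow g with hμdef
  have hμnn : ∀ ℓ x, 0 ≤ μ ℓ x := convPow_nonneg hgnn
  have hμzero : ∀ ℓ, ∀ x ∉ Γfin, μ ℓ x = 0 := by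
    intro ℓ
    induction ℓ with
    | zero =>
      intro x hx
      have hne : x ≠ 1 := fun h => hx (h ▸ hone)
      show (if x = 1 then (1:ℝ) else 0) = 0
      simp [hne]
    | succ ℓ ih =>
      intro x hx
      show conv (μ ℓ) g x = 0
      unfold conv
      refine Finset.sum_eq_zero fun y _ => ?_
      by_cases hy : y ∈ Γfin
      · have hxy : x * y⁻¹ ∉ Γfin := by
          intro hmem
          have : (x * y⁻¹) * y ∈ Γfin := hmul _ hmem _ hy
          rw [inv_mul_cancel_right] at this
          exact hx this
        rw [hgzero _ hxy, mul_zero]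
      · rw [ih y hy, zero_mul]
  have hμsum : ∀ ℓ, ∑ y ∈ Γfin, μ ℓ y = 1 := by
    intro ℓ
    rw [Finset.sum_subset (Finset.subset_univ Γfin)
      (fun x _ hx => hμzero ℓ x hx)]
    exact sum_convPow hgsum ℓ
  have hgrow : ∀ x ∈ Γfin, ∑ y ∈ Γfin, g (x * y⁻¹) = 1 := by
    intro x hx
    rw [Finset.sum_subset (Finset.subset_univ Γfin) (fun y _ hy => ?_)]
    · rw [Fintype.sum_bijective (fun y : G => x * y⁻¹)
        (((Equiv.inv G).trans (Equiv.mulLeft x)).bijective)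
        (fun y => g (x * y⁻¹)) g (fun y => rfl)]
      exact hgsum
    · apply hgzero
      intro hmem
      have : (x * y⁻¹)⁻¹ * x ∈ Γfin := hmul _ (hinv _ hmem) _ hx
      have heq : (x * y⁻¹)⁻¹ * x = y := by group
      rw [heq] at this
      exact hy this
  have hgsumΓ : ∑ y ∈ Γfin, g y = 1 := by
    rw [Finset.sum_subset (Finset.subset_univ Γfin) (fun x _ hx => hgzero x hx)]
    exact hgsum
  -- the minimum of g on Γfin
  have hΓne : (Γfin.image g).Nonempty := ⟨g 1, Finset.mem_image_of_mem g hone⟩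
  set ε : ℝ := (Γfin.image g).min' hΓne with hε
  have hεle : ∀ y ∈ Γfin, ε ≤ g y := fun y hy =>
    Finset.min'_le _ _ (Finset.mem_image_of_mem g hy)
  have hεpos : 0 < ε := by
    obtain ⟨y, hy, hyeq⟩ := Finset.mem_image.1 (Finset.min'_mem (Γfin.image g) hΓne)
    rw [hε, ← hyeq]
    exact (memΓfin y).1 hy
  have hNε : (N : ℝ) * ε ≤ 1 := by
    have : ∑ y ∈ Γfin, ε ≤ ∑ y ∈ Γfin, g y := Finset.sum_le_sum hεle
    rw [Finset.sum_const, nsmul_eq_mul, hgsumΓ] at this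
    exact this
  set r : ℝ := 1 - (N : ℝ) * ε with hr
  have hr0 : 0 ≤ r := by rw [hr]; linarith
  have hr1 : r < 1 := by
    rw [hr]
    have : 0 < (N : ℝ) * ε := mul_pos (by exact_mod_cast hNpos) hεpos
    linarith
  -- the key contraction estimate
  have hrow : ∀ ℓ x, x ∈ Γfin → μ (ℓ+1) x = ∑ y ∈ Γfin, μ ℓ y * g (x * y⁻¹) := by
    intro ℓ x hx
    show conv (μ ℓ) g x = _
    unfold conv
    rw [Finset.sum_subset (Finset.subset_univ Γfin)
      (fun y _ hy => by rw [hμzero ℓ y hy, zero_mul])]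
  have key : ∀ ℓ : ℕ, ∀ x ∈ Γfin, |μ ℓ x - u| ≤ r ^ ℓ := by
    intro ℓ
    induction ℓ with
    | zero =>
      intro x hx
      show |(if x = 1 then (1:ℝ) else 0) - u| ≤ 1
      split_ifs
      · rw [abs_of_nonneg (by linarith)]; linarith
      · rw [zero_sub, abs_neg, abs_of_nonneg (le_of_lt hupos)]; linarith
    | succ ℓ ih =>
      intro x hx
      have huN : (N : ℝ) * (u * ε) = ε := by
        rw [hu, ← mul_assoc, mul_inv_cancel₀ (by exact_mod_cast hNpos.ne' : (N:ℝ) ≠ 0), one_mul]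
      have expand : μ (ℓ+1) x - u = ∑ y ∈ Γfin, (μ ℓ y - u) * (g (x * y⁻¹) - ε) := by
        have e1 : ∑ y ∈ Γfin, (μ ℓ y - u) * (g (x * y⁻¹) - ε)
            = (∑ y ∈ Γfin, μ ℓ y * g (x * y⁻¹)) - ε * (∑ y ∈ Γfin, μ ℓ y)
              - u * (∑ y ∈ Γfin, g (x * y⁻¹)) + (N : ℝ) * (u * ε) := by
          rw [Finset.sum_congr rfl (fun y _ => by ring_nf :
            ∀ y ∈ Γfin, (μ ℓ y - u) * (g (x * y⁻¹) - ε)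
              = μ ℓ y * g (x * y⁻¹) - ε * μ ℓ y - u * g (x * y⁻¹) + u * ε)]
          rw [Finset.sum_add_distrib, Finset.sum_sub_distrib, Finset.sum_sub_distrib,
            ← Finset.mul_sum, ← Finset.mul_sum, Finset.sum_const, nsmul_eq_mul]
        rw [e1, hμsum ℓ, hgrow x hx, huN, ← hrow ℓ x hx]
        ring
      rw [expand]
      have habs : |∑ y ∈ Γfin, (μ ℓ y - u) * (g (x * y⁻¹) - ε)|
          ≤ ∑ y ∈ Γfin, |μ ℓ y - u| * (g (x * y⁻¹) - ε) := by
        refine le_trans (Finset.abs_sum_le_sum_abs _ _) (le_of_eq ?_)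
        refine Finset.sum_congr rfl fun y hy => ?_
        rw [abs_mul, abs_of_nonneg (sub_nonneg.2 (hεle _ (hxyinv x hx y hy)))]
      refine le_trans habs ?_
      have hstep : ∑ y ∈ Γfin, |μ ℓ y - u| * (g (x * y⁻¹) - ε)
          ≤ ∑ y ∈ Γfin, r ^ ℓ * (g (x * y⁻¹) - ε) := by
        refine Finset.sum_le_sum fun y hy => ?_
        exact mul_le_mul_of_nonneg_right (ih y hy)
          (sub_nonneg.2 (hεle _ (hxyinv x hx y hy)))
      refine le_trans hstep (le_of_eq ?_)
      rw [← Finset.mul_sum, Finset.sum_sub_distrib, hgrow x hx, Finset.sum_const,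
        nsmul_eq_mul, pow_succ]
  -- conclusion
  intro x
  have hrw : ∀ ℓ : ℕ, convPow f (ℓ * k) x = μ ℓ x := fun ℓ => by
    rw [convPow_mul f k ℓ]
  rw [hΓcoe]
  by_cases hx : x ∈ Γfin
  · have hmemΓ : x ∈ ({x : G | 0 < convPow f k x} : Set G) := (memΓfin x).1 hx
    rw [Set.indicator_of_mem hmemΓ]
    have h0 : Tendsto (fun ℓ : ℕ => r ^ ℓ) atTop (nhds 0) :=
      tendsto_pow_atTop_nhds_zero_of_lt_one hr0 hr1
    have h1 : Tendsto (fun ℓ : ℕ => μ ℓ x - u) atTop (nhds 0) :=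
      squeeze_zero_norm (fun ℓ => by rw [Real.norm_eq_abs]; exact key ℓ x hx) h0
    have h2 : Tendsto (fun ℓ : ℕ => μ ℓ x) atTop (nhds u) := by
      have := h1.add_const u
      simpa using this
    rw [hcard]
    exact h2.congr fun ℓ => (hrw ℓ).symm
  · have hnotmem : x ∉ ({x : G | 0 < convPow f k x} : Set G) := fun h => hx ((memΓfin x).2 h)
    rw [Set.indicator_of_notMem hnotmem]
    have : Tendsto (fun ℓ : ℕ => μ ℓ x) atTop (nhds 0) := by
      refine tendsto_const_nhds.congr fun ℓ => ?_
      exact (hμzero ℓ x hx).symm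
    exact this.congr fun ℓ => (hrw ℓ).symm
end

section
/- Let G and G₁,…,Gₘ be finite groups with counting measure and φⱼ : G → Gⱼ homomorphisms, s ∈ [0,1]^m. Then the supremum BL(φ,s) of the Brascamp–Lieb functional BL(φ,s;f) over all nonnegative nonzero tuples f is attained at a tuple of the form fⱼ = aⱼ χ_{Γⱼ}, where each Γⱼ is a subgroup of Gⱼ and aⱼ > 0. -/
open Finset

/-!
Normalized extremizers exist by compactness of the product of simplices, and Ball's inequality
shows that the componentwise convolution of two of them is again one; so is the reflection
`x ↦ f (x⁻¹)`. Convolving an extremizer with its reflection turns each support `S` into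
`S / S ∋ 1`, which contains `S` once `1 ∈ S`; so an extremizer of maximal support among those
with `1 ∈ S` has `S / S ⊆ S`: its supports are subgroups `Γⱼ`.
The iterated convolution powers of such an extremizer converge to the normalized indicators of
the `Γⱼ`, which are therefore extremizers as well.
-/

open Filter Topology Pointwise

lemma ne_zero_of_mem_stdSimplex {ι : Type*} [Fintype ι] {f : ι → ℝ} (hf : f ∈ stdSimplex ℝ ι) :
    f ≠ 0 := by
  rintro rfl
  simpa using hf.2

section Convolution

variable {H : Type*} [Group H] [Fintype H]

lemma conv_nonneg {p q : H → ℝ} (hp : 0 ≤ p) (hq : 0 ≤ q) : 0 ≤ conv p q :=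
  fun _ => sum_nonneg fun y _ => mul_nonneg (hp y) (hq _)

lemma sum_conv_s15 (p q : H → ℝ) : ∑ x, conv p q x = (∑ x, p x) * ∑ x, q x := by
  simp only [conv]
  rw [sum_comm, sum_mul]
  refine sum_congr rfl fun y _ => ?_
  rw [← mul_sum]
  exact congrArg _ (Equiv.sum_comp (Equiv.mulRight y⁻¹) q)

lemma conv_mem_stdSimplex {p q : H → ℝ} (hp : p ∈ stdSimplex ℝ H) (hq : q ∈ stdSimplex ℝ H) :
    conv p q ∈ stdSimplex ℝ H :=
  ⟨conv_nonneg hp.1 hq.1, by rw [sum_conv_s15, hp.2, hq.2, one_mul]⟩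

lemma conv_sub_left (p q r : H → ℝ) : conv (p - q) r = conv p r - conv q r := by
  ext x
  simp [conv, sub_mul, sum_sub_distrib]

lemma conv_sub_right (p q r : H → ℝ) : conv p (q - r) = conv p q - conv p r := by
  ext x
  simp [conv, mul_sub, sum_sub_distrib]

lemma conv_smul_left (c : ℝ) (p q : H → ℝ) : conv (c • p) q = c • conv p q := by
  ext x
  simp [conv, mul_sum, mul_assoc]

lemma support_conv_subset {Γ : Subgroup H} {p q : H → ℝ} (hp : Function.support p ⊆ Γ)
    (hq : Function.support q ⊆ Γ) : Function.support (conv p q) ⊆ Γ := by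
  rw [Function.support_subset_iff'] at *
  intro x hx
  refine sum_eq_zero fun y _ => ?_
  by_cases hy : y ∈ Γ
  · rw [hq _ fun h => hx (by simpa using Γ.mul_mem h hy), mul_zero]
  · rw [hp y hy, zero_mul]

lemma div_support_subset_support_conv_inv {p : H → ℝ} (hp : 0 ≤ p) :
    Function.support p / Function.support p ⊆ Function.support (conv (fun x => p x⁻¹) p) := by
  rintro _ ⟨a, ha, b, hb, rfl⟩
  refine (lt_of_lt_of_le ?_ (single_le_sum (fun y _ => mul_nonneg (hp y⁻¹) (hp _))
    (mem_univ b⁻¹))).ne'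
  simpa using mul_pos ((hp b).lt_of_ne' hb) ((hp a).lt_of_ne' ha)

lemma norm_conv_le {r : H → ℝ} (hr : 0 ≤ r) (e : H → ℝ) :
    ‖conv r e‖ ≤ (∑ x, r x) * ‖e‖ := by
  refine (pi_norm_le_iff_of_nonneg (mul_nonneg (sum_nonneg fun x _ => hr x) (norm_nonneg e))).2
    fun x => ?_
  calc ‖conv r e x‖ ≤ ∑ y, ‖r y * e (x * y⁻¹)‖ := norm_sum_le _ _
    _ ≤ ∑ y, r y * ‖e‖ := sum_le_sum fun y _ => by
        rw [norm_mul, Real.norm_of_nonneg (hr y)]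
        exact mul_le_mul_of_nonneg_left (norm_le_pi_norm e _) (hr y)
    _ = (∑ x, r x) * ‖e‖ := by rw [sum_mul]

end Convolution

section NormalizedIndicator

variable {H : Type*} [Group H]

noncomputable def normalizedIndicator (Γ : Subgroup H) : H → ℝ :=
  Set.indicator Γ fun _ => (Nat.card Γ : ℝ)⁻¹

variable {Γ : Subgroup H}

lemma normalizedIndicator_mul_of_mem_right {y : H} (hy : y ∈ Γ) (x : H) :
    normalizedIndicator Γ (x * y) = normalizedIndicator Γ x := by
  classical
  simp only [normalizedIndicator, Set.indicator_apply, SetLike.mem_coe,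
    Γ.mul_mem_cancel_right hy]

lemma normalizedIndicator_mul_of_mem_left {y : H} (hy : y ∈ Γ) (x : H) :
    normalizedIndicator Γ (y * x) = normalizedIndicator Γ x := by
  classical
  simp only [normalizedIndicator, Set.indicator_apply, SetLike.mem_coe,
    Γ.mul_mem_cancel_left hy]

lemma support_normalizedIndicator_subset : Function.support (normalizedIndicator Γ) ⊆ Γ :=
  Set.support_indicator_subset

variable [Fintype H]

lemma normalizedIndicator_mem_stdSimplex : normalizedIndicator Γ ∈ stdSimplex ℝ H := by
  classical
  refine ⟨Set.indicator_nonneg fun _ _ => by positivity, ?_⟩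
  have hcard : (#{x | x ∈ Γ} : ℝ) ≠ 0 :=
    Nat.cast_ne_zero.2 (card_ne_zero.2 ⟨1, by simp [Γ.one_mem]⟩)
  simp [normalizedIndicator, Set.indicator_apply, sum_ite, Fintype.card_subtype, hcard]

lemma conv_normalizedIndicator {p : H → ℝ} (hp : Function.support p ⊆ Γ) :
    conv p (normalizedIndicator Γ) = (∑ x, p x) • normalizedIndicator Γ := by
  ext x
  simp only [conv, Pi.smul_apply, smul_eq_mul, sum_mul]
  refine sum_congr rfl fun y _ => ?_
  by_cases hy : y ∈ Γ
  · rw [normalizedIndicator_mul_of_mem_right (Γ.inv_mem hy)]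
  · rw [Function.notMem_support.1 fun h => hy (hp h), zero_mul, zero_mul]

lemma normalizedIndicator_conv {p : H → ℝ} (hp : Function.support p ⊆ Γ) :
    conv (normalizedIndicator Γ) p = (∑ x, p x) • normalizedIndicator Γ := by
  ext x
  simp only [conv, Pi.smul_apply, smul_eq_mul, sum_mul]
  refine (Equiv.sum_comp ((Equiv.inv H).trans (Equiv.mulRight x)) _).symm.trans
    (sum_congr rfl fun z _ => ?_)
  simp only [Equiv.trans_apply, Equiv.inv_apply, Equiv.coe_mulRight, mul_inv_rev, inv_inv,
    mul_inv_cancel_left]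
  by_cases hz : z ∈ Γ
  · rw [normalizedIndicator_mul_of_mem_left (Γ.inv_mem hz), mul_comm]
  · rw [Function.notMem_support.1 fun h => hz (hp h), zero_mul, mul_zero]

lemma exists_pos_smul_normalizedIndicator_le {g : H → ℝ} (hg : 0 ≤ g)
    (hΓ : ∀ x ∈ Γ, g x ≠ 0) : ∃ c : ℝ, 0 < c ∧ c • normalizedIndicator Γ ≤ g := by
  classical
  obtain ⟨x₀, hx₀, hmin⟩ := exists_min_image (univ.filter (· ∈ Γ)) g ⟨1, by simp [Γ.one_mem]⟩
  have hx₀Γ : x₀ ∈ Γ := (mem_filter.1 hx₀).2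
  have hcard : (0 : ℝ) < Nat.card Γ := by exact_mod_cast Nat.card_pos
  refine ⟨g x₀ * Nat.card Γ, mul_pos ((hg x₀).lt_of_ne' (hΓ x₀ hx₀Γ)) hcard, fun x => ?_⟩
  by_cases hx : x ∈ Γ
  · simpa [normalizedIndicator, hx, hcard.ne'] using hmin x (by simp [hx])
  · simpa [normalizedIndicator, hx] using hg x

/-- The normalized indicator absorbs probability vectors supported in `Γ`, which is why
subtracting it from a convolution of two of them commutes with convolution. -/
lemma conv_sub_normalizedIndicator {g p : H → ℝ} (hg : ∑ x, g x = 1)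
    (hgΓ : Function.support g ⊆ Γ) (hp : ∑ x, p x = 1) (hpΓ : Function.support p ⊆ Γ) (c : ℝ) :
    conv g p - normalizedIndicator Γ
      = conv (g - c • normalizedIndicator Γ) (p - normalizedIndicator Γ) := by
  rw [conv_sub_left, conv_sub_right, conv_sub_right, conv_smul_left, conv_smul_left,
    conv_normalizedIndicator hgΓ, normalizedIndicator_conv hpΓ,
    conv_normalizedIndicator support_normalizedIndicator_subset, hg, hp,
    normalizedIndicator_mem_stdSimplex.2, one_smul]
  abel

/-- With `c • u ≤ g` for the normalized indicator `u`, each step multiplies the error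
`g^{*(k+1)} - u` by `g - c • u`, contracting its sup norm by `1 - c`. -/
theorem tendsto_iterate_conv_normalizedIndicator {g : H → ℝ} (hg : g ∈ stdSimplex ℝ H)
    (hsupp : Function.support g = Γ) :
    Tendsto (fun k => (conv g ·)^[k] g) atTop (𝓝 (normalizedIndicator Γ)) := by
  set u := normalizedIndicator Γ
  have hu : ∑ x, u x = 1 := normalizedIndicator_mem_stdSimplex.2
  obtain ⟨c, hc, hcg⟩ := exists_pos_smul_normalizedIndicator_le hg.1 fun x hx =>
    (hsupp.symm ▸ hx : x ∈ Function.support g)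
  have hr : 0 ≤ g - c • u := sub_nonneg.2 hcg
  have hsum_r : ∑ x, (g - c • u) x = 1 - c := by
    simp [sum_sub_distrib, ← mul_sum, hg.2, hu]
  have h1c : 0 ≤ 1 - c := hsum_r ▸ sum_nonneg fun x _ => hr x
  have hiter : ∀ k, (conv g ·)^[k] g ∈ stdSimplex ℝ H ∧
      Function.support ((conv g ·)^[k] g) ⊆ Γ := by
    intro k
    induction k with
    | zero => exact ⟨hg, hsupp.le⟩
    | succ k ih =>
      rw [Function.iterate_succ_apply']
      exact ⟨conv_mem_stdSimplex hg ih.1, support_conv_subset hsupp.le ih.2⟩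
  have hbound : ∀ k, ‖(conv g ·)^[k] g - u‖ ≤ (1 - c) ^ k * ‖g - u‖ := by
    intro k
    induction k with
    | zero => simp
    | succ k ih =>
      rw [Function.iterate_succ_apply', conv_sub_normalizedIndicator hg.2 hsupp.le
        (hiter k).1.2 (hiter k).2 c, pow_succ', mul_assoc, ← hsum_r]
      exact (norm_conv_le hr _).trans (mul_le_mul_of_nonneg_left (hsum_r ▸ ih) (hsum_r ▸ h1c))
  have herr : Tendsto (fun k => (conv g ·)^[k] g - u) atTop (𝓝 0) := squeeze_zero_norm hbound <| by
    simpa using (tendsto_pow_atTop_nhds_zero_of_lt_one h1c (by linarith)).mul_const ‖g - u‖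
  simpa using herr.add_const u

end NormalizedIndicator

section BLden

variable {m : ℕ} {K : Fin m → Type*} [∀ j, Fintype (K j)] {s : Fin m → ℝ}

noncomputable def BLden (s : Fin m → ℝ) (f : ∀ j, K j → ℝ) : ℝ :=
  ∏ j, (∑ y, f j y) ^ s j

lemma BLden_pos {f : ∀ j, K j → ℝ} (hf : ∀ j, 0 < ∑ y, f j y) : 0 < BLden s f :=
  prod_pos fun j _ => Real.rpow_pos_of_pos (hf j) _

lemma continuous_BLden (hs : 0 ≤ s) : Continuous (BLden (K := K) s) :=
  continuous_finsetProd _ fun j _ => (Real.continuous_rpow_const (hs j)).comp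
    (continuous_finsetSum _ fun y _ => (continuous_apply y).comp (continuous_apply j))

end BLden

section BrascampLieb

variable {m : ℕ} {G : Type*} {K : Fin m → Type*} [Group G] [Fintype G] [∀ j, Group (K j)]
  (φ : ∀ j, G →* K j) {s : Fin m → ℝ}

noncomputable def BLnum (φ : ∀ j, G →* K j) (s : Fin m → ℝ) (f : ∀ j, K j → ℝ) : ℝ :=
  ∑ x, ∏ j, f j (φ j x) ^ s j

lemma BLnum_nonneg {f : ∀ j, K j → ℝ} (hf : ∀ j x, 0 ≤ f j x) : 0 ≤ BLnum φ s f :=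
  sum_nonneg fun _ _ => prod_nonneg fun j _ => Real.rpow_nonneg (hf j _) _

lemma continuous_BLnum (hs : 0 ≤ s) : Continuous (BLnum φ s) :=
  continuous_finsetSum _ fun _ _ => continuous_finsetProd _ fun j _ =>
    (Real.continuous_rpow_const (hs j)).comp ((continuous_apply _).comp (continuous_apply j))

variable [∀ j, Fintype (K j)]

lemma BLfun_eq_div (f : ∀ j, K j → ℝ) : BLfun φ s f = BLnum φ s f / BLden s f := rfl

lemma BLfun_eq_BLnum {f : ∀ j, K j → ℝ} (hf : ∀ j, ∑ y, f j y = 1) :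
    BLfun φ s f = BLnum φ s f := by
  simp [BLfun_eq_div, BLden, hf]

lemma BLfun_smul {f : ∀ j, K j → ℝ} (hf : ∀ j x, 0 ≤ f j x) {c : Fin m → ℝ}
    (hc : ∀ j, 0 < c j) : BLfun φ s (fun j => c j • f j) = BLfun φ s f := by
  have hnum : BLnum φ s (fun j => c j • f j) = (∏ j, c j ^ s j) * BLnum φ s f := by
    simp only [BLnum, Pi.smul_apply, smul_eq_mul, mul_sum, ← prod_mul_distrib]
    exact sum_congr rfl fun x _ => prod_congr rfl fun j _ => Real.mul_rpow (hc j).le (hf j _)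
  have hden : BLden s (fun j => c j • f j) = (∏ j, c j ^ s j) * BLden s f := by
    simp only [BLden, Pi.smul_apply, smul_eq_mul, ← mul_sum, ← prod_mul_distrib]
    exact prod_congr rfl fun j _ => Real.mul_rpow (hc j).le (sum_nonneg fun y _ => hf j y)
  rw [BLfun_eq_div, BLfun_eq_div, hnum, hden,
    mul_div_mul_left _ _ (prod_pos fun j _ => Real.rpow_pos_of_pos (hc j) _).ne']

lemma exists_stdSimplex_BLnum_eq_BLfun {f : ∀ j, K j → ℝ} (hf : ∀ j x, 0 ≤ f j x)
    (hf₀ : ∀ j, f j ≠ 0) :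
    ∃ f' : ∀ j, K j → ℝ, (∀ j, f' j ∈ stdSimplex ℝ (K j)) ∧ BLnum φ s f' = BLfun φ s f := by
  have hsum : ∀ j, 0 < ∑ y, f j y := fun j =>
    Fintype.sum_pos (lt_of_le_of_ne (hf j) (hf₀ j).symm)
  have hmem : ∀ j, (∑ y, f j y)⁻¹ • f j ∈ stdSimplex ℝ (K j) := fun j =>
    ⟨fun y => mul_nonneg (inv_nonneg.2 (hsum j).le) (hf j y), by
      simp [← mul_sum, (hsum j).ne']⟩
  exact ⟨_, hmem, by rw [← BLfun_eq_BLnum φ fun j => (hmem j).2,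
    BLfun_smul φ hf fun j => inv_pos.2 (hsum j)]⟩

lemma exists_isGreatest_BLnum (hs : 0 ≤ s) :
    ∃ f₀ : ∀ j, K j → ℝ, (∀ j, f₀ j ∈ stdSimplex ℝ (K j)) ∧
      IsGreatest {c : ℝ | ∃ f : ∀ j, K j → ℝ,
        (∀ j x, 0 ≤ f j x) ∧ (∀ j, f j ≠ 0) ∧ c = BLfun φ s f} (BLnum φ s f₀) := by
  classical
  obtain ⟨f₀, hf₀, hmax⟩ :=
    (isCompact_univ_pi fun j => isCompact_stdSimplex ℝ (K j)).exists_isMaxOn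
      (Set.univ_pi_nonempty_iff.2 fun j => ⟨_, single_mem_stdSimplex ℝ 1⟩)
      (continuous_BLnum φ hs).continuousOn
  have hf₀' : ∀ j, f₀ j ∈ stdSimplex ℝ (K j) := fun j => hf₀ j (Set.mem_univ j)
  refine ⟨f₀, hf₀', ⟨f₀, fun j => (hf₀' j).1, fun j => ne_zero_of_mem_stdSimplex (hf₀' j),
    (BLfun_eq_BLnum φ fun j => (hf₀' j).2).symm⟩, ?_⟩
  rintro _ ⟨f, hf, hf0, rfl⟩
  obtain ⟨f', hf', heq⟩ := exists_stdSimplex_BLnum_eq_BLfun φ hf hf0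
  exact heq ▸ hmax fun j _ => hf' j

lemma BLfun_le_BLconst (hs : 0 ≤ s) {f : ∀ j, K j → ℝ} (hf : ∀ j x, 0 ≤ f j x)
    (hf₀ : ∀ j, f j ≠ 0) : BLfun φ s f ≤ BLconst φ s := by
  obtain ⟨f₀, -, hgreatest⟩ := exists_isGreatest_BLnum φ hs
  rw [BLconst, hgreatest.csSup_eq]
  exact hgreatest.2 ⟨f, hf, hf₀, rfl⟩

lemma BLnum_le_BLconst (hs : 0 ≤ s) {f : ∀ j, K j → ℝ} (hf : ∀ j, f j ∈ stdSimplex ℝ (K j)) :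
    BLnum φ s f ≤ BLconst φ s :=
  BLfun_eq_BLnum φ (fun j => (hf j).2) ▸
    BLfun_le_BLconst φ hs (fun j => (hf j).1) fun j => ne_zero_of_mem_stdSimplex (hf j)

/-- `BLconst` only sees inputs with nonzero components; the others are limits of `f + t`. -/
lemma BLnum_le_BLconst_mul_BLden (hs : 0 ≤ s) {f : ∀ j, K j → ℝ} (hf : ∀ j x, 0 ≤ f j x) :
    BLnum φ s f ≤ BLconst φ s * BLden s f := by
  set F : ℝ → ∀ j, K j → ℝ := fun t j x => f j x + t
  have hF : Continuous F := continuous_pi fun j => continuous_pi fun x => continuous_const_add _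
  have hpos : ∀ t > 0, BLnum φ s (F t) ≤ BLconst φ s * BLden s (F t) := by
    intro t ht
    have hFpos : ∀ j x, 0 < F t j x := fun j x => add_pos_of_nonneg_of_pos (hf j x) ht
    have := BLfun_le_BLconst φ hs (fun j x => (hFpos j x).le) fun j h => (hFpos j 1).ne' (congrFun h 1)
    rwa [BLfun_eq_div, div_le_iff₀ (BLden_pos fun j => sum_pos (fun x _ => hFpos j x) ⟨1, mem_univ 1⟩)] at this
  have hF0 : F 0 = f := by simp [F]
  refine le_of_tendsto_of_tendsto (b := 𝓝[>] 0) ?_ ?_ (eventually_nhdsWithin_of_forall hpos)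
  · exact (((continuous_BLnum φ hs).comp hF).tendsto' 0 _ (by rw [Function.comp_apply, hF0])).mono_left
      nhdsWithin_le_nhds
  · exact ((((continuous_BLden hs).comp hF).tendsto' 0 _ (by rw [Function.comp_apply, hF0])).mono_left
      nhdsWithin_le_nhds).const_mul _

end BrascampLieb

section Extremizers

variable {m : ℕ} {G : Type*} {K : Fin m → Type*} [Group G] [Fintype G] [∀ j, Group (K j)]
  [∀ j, Fintype (K j)] (φ : ∀ j, G →* K j) {s : Fin m → ℝ}

/-- Ball's inequality. -/
theorem BLnum_mul_BLnum_le (hs : 0 ≤ s) {f g : ∀ j, K j → ℝ} (hf : ∀ j x, 0 ≤ f j x)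
    (hg : ∀ j x, 0 ≤ g j x) :
    BLnum φ s f * BLnum φ s g ≤ BLconst φ s * BLnum φ s (fun j => conv (f j) (g j)) := by
  have hterm : ∀ x y, ∏ j, (f j (φ j y) * g j (φ j x * (φ j y)⁻¹)) ^ s j
      = (∏ j, f j (φ j y) ^ s j) * ∏ j, g j (φ j (x * y⁻¹)) ^ s j := fun x y => by
    rw [← prod_mul_distrib]
    exact prod_congr rfl fun j _ => by rw [map_mul, map_inv, Real.mul_rpow (hf j _) (hg j _)]
  calc BLnum φ s f * BLnum φ s g
      = ∑ x, BLnum φ s (fun j z => f j z * g j (φ j x * z⁻¹)) := by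
        simp only [BLnum]
        rw [sum_comm]
        simp only [hterm, ← mul_sum, sum_mul]
        exact sum_congr rfl fun y _ =>
          congrArg _ (Equiv.sum_comp (Equiv.mulRight y⁻¹) fun x => ∏ j, g j (φ j x) ^ s j).symm
    _ ≤ ∑ x, BLconst φ s * BLden s (fun j z => f j z * g j (φ j x * z⁻¹)) :=
        sum_le_sum fun x _ => BLnum_le_BLconst_mul_BLden φ hs fun j z =>
          mul_nonneg (hf j z) (hg j _)
    _ = BLconst φ s * BLnum φ s (fun j => conv (f j) (g j)) := by
        rw [← mul_sum]
        rfl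

def BLextremizers (φ : ∀ j, G →* K j) (s : Fin m → ℝ) : Set (∀ j, K j → ℝ) :=
  {f | (∀ j, f j ∈ stdSimplex ℝ (K j)) ∧ BLnum φ s f = BLconst φ s}

lemma BLextremizers_nonempty (hs : 0 ≤ s) : (BLextremizers φ s).Nonempty := by
  obtain ⟨f₀, hf₀, hgreatest⟩ := exists_isGreatest_BLnum φ hs
  exact ⟨f₀, hf₀, by rw [BLconst, hgreatest.csSup_eq]⟩

lemma isClosed_BLextremizers (hs : 0 ≤ s) : IsClosed (BLextremizers φ s) := by
  simp only [BLextremizers, Set.ofPred_and, Set.ofPred_forall]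
  exact (isClosed_iInter fun j => (isClosed_stdSimplex ℝ (K j)).preimage (continuous_apply j)).inter
    (isClosed_eq (continuous_BLnum φ hs) continuous_const)

lemma inv_mem_BLextremizers {f : ∀ j, K j → ℝ} (hf : f ∈ BLextremizers φ s) :
    (fun j x => f j x⁻¹) ∈ BLextremizers φ s := by
  refine ⟨fun j => ⟨fun x => (hf.1 j).1 x⁻¹, ?_⟩, ?_⟩
  · rw [← (hf.1 j).2]
    exact Equiv.sum_comp (Equiv.inv (K j)) (f j)
  · rw [← hf.2]
    simp only [BLnum, ← map_inv]
    exact Equiv.sum_comp (Equiv.inv G) fun x => ∏ j, f j (φ j x) ^ s j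

lemma conv_mem_BLextremizers (hs : 0 ≤ s) {f g : ∀ j, K j → ℝ} (hf : f ∈ BLextremizers φ s)
    (hg : g ∈ BLextremizers φ s) : (fun j => conv (f j) (g j)) ∈ BLextremizers φ s := by
  have hmem : ∀ j, conv (f j) (g j) ∈ stdSimplex ℝ (K j) := fun j =>
    conv_mem_stdSimplex (hf.1 j) (hg.1 j)
  refine ⟨hmem, le_antisymm (BLnum_le_BLconst φ hs hmem) ?_⟩
  have hball := BLnum_mul_BLnum_le φ hs (fun j => (hf.1 j).1) fun j => (hg.1 j).1
  rw [hf.2, hg.2] at hball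
  nlinarith [hf.2 ▸ BLnum_nonneg φ (s := s) fun j => (hf.1 j).1,
    BLnum_nonneg φ (s := s) fun j => (hmem j).1, BLnum_le_BLconst φ hs hmem]

theorem exists_subgroup_support_eq_of_BLextremizers (hs : 0 ≤ s) :
    ∃ (Γ : ∀ j, Subgroup (K j)) (g : ∀ j, K j → ℝ),
      g ∈ BLextremizers φ s ∧ ∀ j, Function.support (g j) = Γ j := by
  set D : (∀ j, K j → ℝ) → ∀ j, K j → ℝ := fun g j => conv (fun x => g j x⁻¹) (g j)
  have hDsupp : ∀ g ∈ BLextremizers φ s, ∀ j,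
      Function.support (g j) / Function.support (g j) ⊆ Function.support (D g j) :=
    fun g hg j => div_support_subset_support_conv_inv (hg.1 j).1
  set F := {g ∈ BLextremizers φ s | ∀ j, (1 : K j) ∈ Function.support (g j)}
  have hDF : ∀ g ∈ BLextremizers φ s, D g ∈ F := fun g hg =>
    ⟨conv_mem_BLextremizers φ hs (inv_mem_BLextremizers φ hg) hg, fun j => by
      obtain ⟨b, hb⟩ := Function.support_nonempty_iff.2 (ne_zero_of_mem_stdSimplex (hg.1 j))
      simpa using hDsupp g hg j (Set.div_mem_div hb hb)⟩
  set supp : (∀ j, K j → ℝ) → ∀ j, Set (K j) := fun g j => Function.support (g j)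
  obtain ⟨f, hf⟩ := BLextremizers_nonempty φ hs
  obtain ⟨_, ⟨g, hg, rfl⟩, hmax⟩ :=
    (Set.toFinite (supp '' F)).exists_maximal ⟨_, D f, hDF f hf, rfl⟩
  have hle : supp g ≤ supp (D g) := fun j x hx =>
    hDsupp g hg.1 j (by simpa using Set.div_mem_div hx (hg.2 j))
  have hclosed : ∀ j, Function.support (g j) / Function.support (g j) ⊆ Function.support (g j) :=
    fun j => (hDsupp g hg.1 j).trans (hmax ⟨D g, hDF g hg.1, rfl⟩ hle j)
  exact ⟨fun j => Subgroup.ofDiv (Function.support (g j)) ⟨1, hg.2 j⟩ fun x hx y hy =>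
    div_eq_mul_inv x y ▸ hclosed j (Set.div_mem_div hx hy), g, hg.1, fun j => rfl⟩

end Extremizers

/-- On finite groups the Brascamp–Lieb constant is attained by inputs which
are positive multiples of indicator functions of subgroups. -/
theorem BLconst_attained_at_subgroups {m : ℕ} {G : Type*} {K : Fin m → Type*}
    [Group G] [Fintype G] [∀ j, Group (K j)] [∀ j, Fintype (K j)]
    (φ : ∀ j, G →* K j) (s : Fin m → ℝ) (hs : ∀ j, s j ∈ Set.Icc (0 : ℝ) 1) :
    ∃ (Γ : ∀ j, Subgroup (K j)) (a : Fin m → ℝ), (∀ j, 0 < a j) ∧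
      BLconst φ s
        = BLfun φ s (fun j => Set.indicator (Γ j : Set (K j)) (fun _ => a j)) := by
  have hs₀ : 0 ≤ s := fun j => (hs j).1
  obtain ⟨Γ, g, hg, hsupp⟩ := exists_subgroup_support_eq_of_BLextremizers φ hs₀
  have hiter : ∀ k, (fun j => (conv (g j) ·)^[k] (g j)) ∈ BLextremizers φ s := by
    intro k
    induction k with
    | zero => exact hg
    | succ k ih =>
      simp only [Function.iterate_succ_apply']
      exact conv_mem_BLextremizers φ hs₀ hg ih
  have hu : (fun j => normalizedIndicator (Γ j)) ∈ BLextremizers φ s :=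
    (isClosed_BLextremizers φ hs₀).mem_of_tendsto
      (tendsto_pi_nhds.2 fun j => tendsto_iterate_conv_normalizedIndicator (hg.1 j) (hsupp j))
      (Eventually.of_forall hiter)
  exact ⟨Γ, fun j => (Nat.card (Γ j) : ℝ)⁻¹, fun j => inv_pos.2 (Nat.cast_pos.2 Nat.card_pos),
    hu.2.symm.trans (BLfun_eq_BLnum φ fun j => (hu.1 j).2).symm⟩
end
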